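/- arXiv:2204.08428 — 8 statements merged into one kernel-verified Lean document; each statement's English description precedes it below -/
import Mathlib

section
/- Gap Lemma: Let C¹ and C² be two compact sets in ℝ^d, with systems of balls {S¹_I} and {S²_L} respectively, and fix r ∈ (0, 1/2). Assume: (i) τ(C¹, {S¹_I}) · τ(C², {S²_L}) ≥ 1/(1 − 2r)²; (ii) C¹ ∩ (1 − 2r)S²_∅ ≠ ∅; (iii) rad(S¹_∅) ≥ r · rad(S²_∅) and rad(S²_∅) ≥ r · rad(S¹_∅); (iv) {S¹_I} and {S²_L} are r-uniformly dense. Then C¹ ∩ C² ≠ ∅. -/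
open Metric Set Filter
open scoped ENNReal

/-- A system of balls in a normed space: closed balls indexed by finite words of
natural numbers, each ball containing its finitely many (at least one) children,
with radii tending to zero along infinite words. -/
structure BallSystem (E : Type*) [NormedAddCommGroup E] where
  center : List ℕ → E
  radius : List ℕ → ℝ
  numChildren : List ℕ → ℕ
  radius_pos : ∀ I, 0 < radius I
  numChildren_pos : ∀ I, 0 < numChildren I
  child_subset : ∀ I, ∀ i < numChildren I,
    Metric.closedBall (center (I ++ [i])) (radius (I ++ [i])) ⊆
      Metric.closedBall (center I) (radius I)
  radius_tendsto : ∀ ω : ℕ → ℕ,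
    Filter.Tendsto (fun n => radius (List.ofFn fun k : Fin n => ω k)) Filter.atTop (nhds 0)

namespace BallSystem

variable {E : Type*} [NormedAddCommGroup E]

/-- The ball with index `I`. -/
def ball (B : BallSystem E) (I : List ℕ) : Set E :=
  Metric.closedBall (B.center I) (B.radius I)

/-- A word is valid if each letter indexes an actual child of the preceding prefix. -/
def valid (B : BallSystem E) (I : List ℕ) : Prop :=
  ∀ n : Fin I.length, I.get n < B.numChildren (I.take n.1)

/-- `B` is a system of balls for the set `C`: `C = ⋂_n ⋃_{|I| = n} S_I`. -/
def IsSystemFor (B : BallSystem E) (C : Set E) : Prop :=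
  C = ⋂ n : ℕ, ⋃ I ∈ {I : List ℕ | B.valid I ∧ I.length = n}, B.ball I

/-- `h_I := max_{x ∈ S_I} dist (x, C)`. -/
noncomputable def h (B : BallSystem E) (C : Set E) (I : List ℕ) : ℝ :=
  ⨆ x ∈ B.ball I, infDist x C

/-- The minimum of the radii of the children of `S_I`. -/
noncomputable def minChildRadius (B : BallSystem E) (I : List ℕ) : ℝ :=
  ⨅ i : Fin (B.numChildren I), B.radius (I ++ [i.1])

/-- The thickness of `C` associated to the system of balls `B`, with values in `[0, ∞]`
(the ratio `min_i rad S_{I,i} / h_I` being interpreted as `∞` when `h_I = 0`). -/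
noncomputable def thickness (B : BallSystem E) (C : Set E) : ℝ≥0∞ :=
  ⨅ I : {I : List ℕ // B.valid I},
    ENNReal.ofReal (B.minChildRadius I.1) / ENNReal.ofReal (B.h C I.1)

/-- The system is `r`-uniformly dense: every closed ball contained in `S_I` with radius
at least `r · rad S_I` contains a child of `S_I`. -/
def UniformlyDense (B : BallSystem E) (r : ℝ) : Prop :=
  ∀ I, B.valid I → ∀ (x : E) (ρ : ℝ), Metric.closedBall x ρ ⊆ B.ball I →
    r * B.radius I ≤ ρ → ∃ i < B.numChildren I, B.ball (I ++ [i]) ⊆ Metric.closedBall x ρ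

end BallSystem

/-!
Say that `C¹` meets a shrunken ball of `{S²}` at scale `ρ` if it meets `(1 - 2r) S²_L` for a node
with `rad S²_L ≤ ρ`; hypothesis (ii) is this at scale `rad S²_∅`. Given `x ∈ C¹ ∩ (1 - 2r) S²_L`,
follow the branch of `{S¹_I}` through `x` down to the node `S¹_J` with `rad S¹_J ≥ r rad S²_L`
whose child `S¹_{J,j} ∋ x` is smaller than `r rad S²_L`. The thickness bound gives
`h¹_J ≤ (1 - 2r) min_i rad S²_{L,i}` or `h²_L < (1 - 2r) min_i rad S¹_{J,i}`. In the first case,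
uniform density of `{S²}` yields a child `S²_{L,i}` inside `S¹_J` near `x`, and its centre is
within `h¹_J ≤ (1 - 2r) rad S²_{L,i}` of `C¹`. In the second case the centre of `S¹_{J,j}` lies in
`S²_L`, hence within `h²_L ≤ (1 - 2r) rad S¹_{J,j}` of `C²`. Either way one of the sets meets a
shrunken ball of the other system at scale `r ρ`. Iterating gives points of `C¹` and `C²` at
distance `O(rⁿ)`, and compactness gives a common point.
-/

def branch (ω : ℕ → ℕ) (n : ℕ) : List ℕ := List.ofFn fun k : Fin n => ω k

@[simp]
theorem length_branch (ω : ℕ → ℕ) (n : ℕ) : (branch ω n).length = n := by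
  simp [branch]

@[simp]
theorem getElem_branch (ω : ℕ → ℕ) {n k : ℕ} (hk : k < (branch ω n).length) :
    (branch ω n)[k] = ω k := by
  simp [branch]

theorem branch_succ (ω : ℕ → ℕ) (n : ℕ) : branch ω (n + 1) = branch ω n ++ [ω n] := by
  rw [branch, List.ofFn_succ_last]
  rfl

theorem take_branch (ω : ℕ → ℕ) {m n : ℕ} (h : m ≤ n) : (branch ω n).take m = branch ω m := by
  apply List.ext_getElem <;> simp [h]

theorem branch_getD_length (L : List ℕ) (d : ℕ) : branch (fun k => L.getD k d) L.length = L := by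
  apply List.ext_getElem <;> simp +contextual

theorem eq_take_append_getD {l : List ℕ} {n : ℕ} (h : l.length = n + 1) (d : ℕ) :
    l = l.take n ++ [l.getD n d] := by
  apply List.ext_getElem (by simp [h])
  intro k hk _
  rcases (Nat.lt_succ_iff.1 (h ▸ hk)).lt_or_eq with hkn | rfl
  · simp [List.getElem_append, hkn]
    omega
  · simp [hk]

theorem eq_branch_of_take_eq {W : ℕ → List ℕ} (hlen : ∀ n, (W n).length = n)
    (htake : ∀ n, (W (n + 1)).take n = W n) (n : ℕ) :
    W n = branch (fun k => (W (k + 1)).getD k 0) n := by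
  induction n with
  | zero => exact List.eq_nil_of_length_eq_zero (hlen 0)
  | succ n ih => rw [branch_succ, ← ih, ← htake n, ← eq_take_append_getD (hlen _)]

section NormedSpace

variable {E : Type*} [NormedAddCommGroup E] [NormedSpace ℝ E]

theorem le_of_closedBall_subset_closedBall [Nontrivial E] {x y : E} {ρ σ : ℝ}
    (h : closedBall x ρ ⊆ closedBall y σ) (hρ : 0 ≤ ρ) : ρ ≤ σ := by
  have hσ : 0 ≤ σ := dist_nonneg.trans (h (mem_closedBall_self hρ))
  have := diam_mono h isBounded_closedBall
  rw [diam_closedBall_eq x hρ, diam_closedBall_eq y hσ] at this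
  linarith

/-- Slide the centre from `x` towards `c`. -/
theorem exists_closedBall_subset_closedBall_dist_le {c x : E} {ρ s : ℝ}
    (hx : x ∈ closedBall c ρ) (hs : 0 ≤ s) (hsρ : s ≤ ρ) :
    ∃ z, closedBall z s ⊆ closedBall c ρ ∧ dist z x ≤ s := by
  have hxc : dist x c ≤ ρ := hx
  have hρ : 0 ≤ ρ := hs.trans hsρ
  have ht : 0 ≤ s / ρ := div_nonneg hs hρ
  have ht1 : s / ρ ≤ 1 := div_le_one_of_le₀ hsρ hρ
  have hsρρ : s / ρ * ρ = s := div_mul_cancel_of_imp fun h => le_antisymm (h ▸ hsρ) hs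
  refine ⟨AffineMap.lineMap x c (s / ρ), closedBall_subset_closedBall' ?_, ?_⟩
  · rw [dist_lineMap_right, Real.norm_of_nonneg (sub_nonneg.2 ht1)]
    linarith [mul_le_mul_of_nonneg_left hxc (sub_nonneg.2 ht1)]
  · rw [dist_lineMap_left, Real.norm_of_nonneg ht]
    linarith [mul_le_mul_of_nonneg_left hxc ht]

end NormedSpace

theorem IsCompact.inter_nonempty_of_forall_exists_dist_lt {X : Type*} [PseudoMetricSpace X]
    {s t : Set X} (hs : IsCompact s) (ht : IsClosed t)
    (h : ∀ ε > 0, ∃ x ∈ s, ∃ y ∈ t, dist x y < ε) : (s ∩ t).Nonempty := by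
  by_contra hst
  obtain ⟨δ, hδ, hδst⟩ := exists_pos_forall_lt_edist hs ht
    (disjoint_iff_inter_eq_empty.2 (not_nonempty_iff_eq_empty.1 hst))
  obtain ⟨x, hx, y, hy, hxy⟩ := h δ hδ
  exact (hδst x hx y hy).not_ge (edist_le_coe.2 hxy.le)

namespace BallSystem

variable {E : Type*} [NormedAddCommGroup E] {B Ba Bb : BallSystem E} {C Ca Cb : Set E}

def IsPath (B : BallSystem E) (ω : ℕ → ℕ) : Prop :=
  ∀ k, ω k < B.numChildren (branch ω k)

theorem valid_nil (B : BallSystem E) : B.valid [] :=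
  fun n => n.elim0

theorem valid_branch_iff {ω : ℕ → ℕ} {n : ℕ} :
    B.valid (branch ω n) ↔ ∀ k < n, ω k < B.numChildren (branch ω k) := by
  refine ⟨fun h k hk => ?_, fun h k => ?_⟩
  · simpa [take_branch ω hk.le] using h ⟨k, by simpa using hk⟩
  · have hk : (k : ℕ) < n := by simpa using k.2
    simpa [take_branch ω hk.le] using h k hk

theorem IsPath.valid_branch {ω : ℕ → ℕ} (hω : B.IsPath ω) (n : ℕ) : B.valid (branch ω n) :=
  valid_branch_iff.2 fun k _ => hω k

theorem isPath_of_forall_valid {ω : ℕ → ℕ} (h : ∀ n, B.valid (branch ω n)) : B.IsPath ω :=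
  fun k => valid_branch_iff.1 (h (k + 1)) k k.lt_succ_self

theorem IsPath.ball_branch_antitone {ω : ℕ → ℕ} (hω : B.IsPath ω) :
    Antitone fun n => B.ball (branch ω n) :=
  antitone_nat_of_succ_le fun n => by
    simpa only [ball, branch_succ] using B.child_subset _ _ (hω n)

theorem valid.exists_isPath {L : List ℕ} (hL : B.valid L) :
    ∃ ω, B.IsPath ω ∧ branch ω L.length = L := by
  refine ⟨fun k => L.getD k 0, fun k => ?_, branch_getD_length L 0⟩
  rcases lt_or_ge k L.length with hk | hk
  · exact valid_branch_iff.1 ((branch_getD_length L 0).symm ▸ hL) k hk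
  · dsimp only
    rw [List.getD_eq_default _ _ hk]
    exact B.numChildren_pos _

theorem valid_branch_succ_iff {ω : ℕ → ℕ} {n : ℕ} :
    B.valid (branch ω (n + 1)) ↔ B.valid (branch ω n) ∧ ω n < B.numChildren (branch ω n) := by
  simp only [valid_branch_iff, Nat.lt_succ_iff_lt_or_eq, or_imp, forall_and, forall_eq]

theorem valid.append_singleton {L : List ℕ} {i : ℕ} (hL : B.valid L)
    (hi : i < B.numChildren L) : B.valid (L ++ [i]) := by
  have h1 := branch_getD_length (L ++ [i]) 0
  have h0 : branch (fun k => (L ++ [i]).getD k 0) L.length = L := by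
    rw [← take_branch _ (show L.length ≤ (L ++ [i]).length by simp), h1, List.take_left]
  rw [← h1, List.length_append, List.length_singleton, valid_branch_succ_iff, h0]
  simpa using ⟨hL, hi⟩

theorem valid.take {L : List ℕ} (hL : B.valid L) (m : ℕ) : B.valid (L.take m) := by
  obtain ⟨ω, hω, hωL⟩ := hL.exists_isPath
  rcases le_total m L.length with hm | hm
  · rw [← hωL, take_branch ω hm]
    exact hω.valid_branch m
  · rwa [List.take_of_length_le hm]

theorem valid.ball_subset_ball_take {L : List ℕ} (hL : B.valid L) (m : ℕ) :
    B.ball L ⊆ B.ball (L.take m) := by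
  obtain ⟨ω, hω, hωL⟩ := hL.exists_isPath
  rcases le_total m L.length with hm | hm
  · rw [← hωL, take_branch ω hm]
    exact hω.ball_branch_antitone hm
  · rw [List.take_of_length_le hm]

theorem tendsto_radius_branch (B : BallSystem E) (ω : ℕ → ℕ) :
    Tendsto (fun n => B.radius (branch ω n)) atTop (nhds 0) :=
  B.radius_tendsto ω

theorem IsSystemFor.exists_valid_mem_ball (hS : B.IsSystemFor C) {x : E} (hx : x ∈ C) (n : ℕ) :
    ∃ W, B.valid W ∧ W.length = n ∧ x ∈ B.ball W := by
  rw [hS] at hx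
  simpa [and_assoc] using mem_iInter.1 hx n

theorem IsSystemFor.mem_of_isPath (hS : B.IsSystemFor C) {ω : ℕ → ℕ} (hω : B.IsPath ω) {x : E}
    (hx : ∀ n, x ∈ B.ball (branch ω n)) : x ∈ C := by
  rw [hS]
  exact mem_iInter.2 fun n => mem_biUnion ⟨hω.valid_branch n, length_branch ω n⟩ (hx n)

theorem IsSystemFor.exists_mem_ball [CompleteSpace E] (hS : B.IsSystemFor C) {L : List ℕ}
    (hL : B.valid L) : ∃ x ∈ C, x ∈ B.ball L := by
  obtain ⟨ω, hω, hωL⟩ := hL.exists_isPath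
  have hanti := hω.ball_branch_antitone
  obtain ⟨x, hx⟩ := nonempty_iInter_of_nonempty_biInter (s := fun n => B.ball (branch ω n))
    (fun _ => isClosed_closedBall) (fun _ => isBounded_closedBall)
    (fun N => ⟨B.center (branch ω N), mem_iInter₂.2 fun n hn =>
      hanti hn (mem_closedBall_self (B.radius_pos _).le)⟩)
    (squeeze_zero (fun _ => diam_nonneg) (fun n => diam_closedBall (B.radius_pos _).le)
      (by simpa using (B.tendsto_radius_branch ω).const_mul 2))
  rw [mem_iInter] at hx
  exact ⟨x, hS.mem_of_isPath hω hx, hωL ▸ hx L.length⟩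

/-- Kőnig's lemma in the finitely branching tree of valid words whose balls contain `x`. -/
theorem IsSystemFor.exists_isPath_mem_ball (hS : B.IsSystemFor C) {x : E} (hx : x ∈ C) :
    ∃ ω, B.IsPath ω ∧ ∀ n, x ∈ B.ball (branch ω n) := by
  let α : ℕ → Type := fun n => {W : List ℕ // B.valid W ∧ W.length = n ∧ x ∈ B.ball W}
  have : Subsingleton (α 0) := ⟨fun V W => Subtype.ext <| by
    rw [List.eq_nil_of_length_eq_zero V.2.2.1, List.eq_nil_of_length_eq_zero W.2.2.1]⟩
  have : ∀ n, Nonempty (α n) := fun n =>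
    let ⟨W, hW⟩ := hS.exists_valid_mem_ball hx n
    ⟨⟨W, hW⟩⟩
  let π : {i j : ℕ} → i ≤ j → α j → α i := fun {i} _ hij W =>
    ⟨W.1.take i, W.2.1.take i, by simp [W.2.2.1, hij], W.2.1.ball_subset_ball_take i W.2.2.2⟩
  obtain ⟨f, hf⟩ := exists_seq_forall_proj_of_forall_finite π
    (fun i W => Subtype.ext (List.take_of_length_le W.2.2.1.le))
    (fun i j k hij hjk W => Subtype.ext (by simp [π, List.take_take, min_eq_left hij]))
    (fun i W => by
      have hfiber : ∀ V : α (i + 1), V.1.take i = W.1 → V.1 = W.1 ++ [V.1.getD i 0] :=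
        fun V hV => hV ▸ eq_take_append_getD V.2.2.1 0
      refine Set.Finite.of_finite_image (f := fun V : α (i + 1) => V.1.getD i 0)
        ((Set.finite_Iio (B.numChildren W.1)).subset ?_) fun V hV V' hV' h =>
          Subtype.ext <| by rw [hfiber V (congrArg Subtype.val hV),
            hfiber V' (congrArg Subtype.val hV'), show V.1.getD i 0 = V'.1.getD i 0 from h]
      rintro _ ⟨V, hV, rfl⟩
      have htake : V.1.take i = W.1 := congrArg Subtype.val hV
      have hi : i < V.1.length := by simp [V.2.2.1]
      simpa [htake, List.getElem?_eq_getElem hi] using V.2.1 ⟨i, hi⟩)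
  have hbranch := eq_branch_of_take_eq (W := fun n => (f n).1) (fun n => (f n).2.2.1)
    (fun n => congrArg Subtype.val (hf (Nat.le_succ n)))
  refine ⟨fun k => (f (k + 1)).1.getD k 0, isPath_of_forall_valid fun n => ?_, fun n => ?_⟩
  · rw [← hbranch]; exact (f n).2.1
  · rw [← hbranch]; exact (f n).2.2.2

theorem IsSystemFor.exists_radius_child_lt_le_radius (hS : B.IsSystemFor C) {x : E} (hx : x ∈ C)
    {t : ℝ} (ht : 0 < t) (hroot : t ≤ B.radius []) :
    ∃ J j, B.valid J ∧ j < B.numChildren J ∧ x ∈ B.ball (J ++ [j]) ∧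
      t ≤ B.radius J ∧ B.radius (J ++ [j]) < t := by
  classical
  obtain ⟨ω, hω, hxω⟩ := hS.exists_isPath_mem_ball hx
  have hP : ∃ n, B.radius (branch ω n) < t :=
    ((B.tendsto_radius_branch ω).eventually (gt_mem_nhds ht)).exists
  obtain ⟨m, hm⟩ : ∃ m, Nat.find hP = m + 1 :=
    Nat.exists_eq_succ_of_ne_zero fun h => (Nat.find_spec hP).not_ge (h ▸ hroot)
  refine ⟨branch ω m, ω m, hω.valid_branch m, hω m, branch_succ ω m ▸ hxω (m + 1),
    not_lt.1 (Nat.find_min hP (hm ▸ m.lt_succ_self)), ?_⟩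
  rw [← branch_succ, ← hm]
  exact Nat.find_spec hP

theorem infDist_le_h {I : List ℕ} {x : E} (hx : x ∈ B.ball I) : infDist x C ≤ B.h C I := by
  have hbdd : BddAbove (range fun y => ⨆ _ : y ∈ B.ball I, infDist y C) := by
    refine ⟨infDist (B.center I) C + B.radius I, ?_⟩
    rintro _ ⟨y, rfl⟩
    refine Real.iSup_le (fun hy => ?_) (add_nonneg infDist_nonneg (B.radius_pos I).le)
    linarith [infDist_le_infDist_add_dist (x := y) (y := B.center I) (s := C), mem_closedBall.1 hy]
  have := le_ciSup hbdd x
  rwa [ciSup_pos hx] at this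

theorem exists_dist_le_h (hC : IsCompact C) (hne : C.Nonempty) {I : List ℕ} {x : E}
    (hx : x ∈ B.ball I) : ∃ y ∈ C, dist x y ≤ B.h C I := by
  obtain ⟨y, hy, hxy⟩ := hC.exists_infDist_eq_dist hne x
  exact ⟨y, hy, hxy ▸ infDist_le_h hx⟩

theorem minChildRadius_le (B : BallSystem E) {I : List ℕ} {i : ℕ} (hi : i < B.numChildren I) :
    B.minChildRadius I ≤ B.radius (I ++ [i]) :=
  ciInf_le ⟨0, by rintro _ ⟨j, rfl⟩; exact (B.radius_pos _).le⟩ (⟨i, hi⟩ : Fin _)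

theorem minChildRadius_pos (B : BallSystem E) (I : List ℕ) : 0 < B.minChildRadius I := by
  have : Nonempty (Fin (B.numChildren I)) := Fin.pos_iff_nonempty.1 (B.numChildren_pos I)
  obtain ⟨i, hi⟩ := Finite.exists_min fun i : Fin (B.numChildren I) => B.radius (I ++ [i.1])
  exact (B.radius_pos _).trans_le (le_ciInf hi)

theorem thickness_le_ofReal_div {I : List ℕ} (hI : B.valid I) (hh : 0 < B.h C I) :
    B.thickness C ≤ ENNReal.ofReal (B.minChildRadius I / B.h C I) := by
  rw [ENNReal.ofReal_div_of_pos hh]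
  exact iInf_le (fun I : {I // B.valid I} => _) ⟨I, hI⟩

theorem h_le_or_h_lt_of_thickness {B₁ B₂ : BallSystem E} {C₁ C₂ : Set E} {s : ℝ} (hs : 0 < s)
    (hτ : ENNReal.ofReal (1 / s ^ 2) ≤ B₁.thickness C₁ * B₂.thickness C₂) {I L : List ℕ}
    (hI : B₁.valid I) (hL : B₂.valid L) :
    B₁.h C₁ I ≤ s * B₂.minChildRadius L ∨ B₂.h C₂ L < s * B₁.minChildRadius I := by
  by_contra! ⟨h₁, h₂⟩
  have hm₁ := B₁.minChildRadius_pos I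
  have hm₂ := B₂.minChildRadius_pos L
  have hh₁ : 0 < B₁.h C₁ I := lt_trans (by positivity) h₁
  have hh₂ : 0 < B₂.h C₂ L := lt_of_lt_of_le (by positivity) h₂
  have := hτ.trans (mul_le_mul' (thickness_le_ofReal_div hI hh₁) (thickness_le_ofReal_div hL hh₂))
  rw [← ENNReal.ofReal_mul (by positivity), ENNReal.ofReal_le_ofReal_iff (by positivity),
    div_mul_div_comm, div_le_div_iff₀ (by positivity) (by positivity)] at this
  nlinarith [mul_lt_mul_of_pos_of_nonneg' h₁ h₂ (by positivity) hh₁.le]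

def MeetsShrunkenBall (B : BallSystem E) (r ρ : ℝ) (C : Set E) : Prop :=
  ∃ L, B.valid L ∧ B.radius L ≤ ρ ∧
    (C ∩ closedBall (B.center L) ((1 - 2 * r) * B.radius L)).Nonempty

variable {r ρ : ℝ}

theorem MeetsShrunkenBall.mono {ρ' : ℝ} (h : B.MeetsShrunkenBall r ρ C) (hρ : ρ ≤ ρ') :
    B.MeetsShrunkenBall r ρ' C :=
  let ⟨L, hL, hLρ, hC⟩ := h
  ⟨L, hL, hLρ.trans hρ, hC⟩

theorem MeetsShrunkenBall.exists_dist_le [CompleteSpace E] (h : Bb.MeetsShrunkenBall r ρ Ca)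
    (hBb : Bb.IsSystemFor Cb) (hr : 0 ≤ r) : ∃ x ∈ Ca, ∃ y ∈ Cb, dist x y ≤ 2 * ρ := by
  obtain ⟨L, hL, hLρ, x, hx, hxL⟩ := h
  obtain ⟨y, hy, hyL⟩ := hBb.exists_mem_ball hL
  refine ⟨x, hx, y, hy, ?_⟩
  have := dist_triangle_right x y (Bb.center L)
  have := mem_closedBall.1 hxL
  have := mem_closedBall.1 hyL
  nlinarith [Bb.radius_pos L]

theorem inter_nonempty_of_meetsShrunkenBall [CompleteSpace E] {B₁ B₂ : BallSystem E}
    {C₁ C₂ : Set E} (hC₁ : IsCompact C₁) (hC₂ : IsClosed C₂) (hB₁ : B₁.IsSystemFor C₁)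
    (hB₂ : B₂.IsSystemFor C₂) (hr : 0 ≤ r) {ρ : ℕ → ℝ} (hρ : Tendsto ρ atTop (nhds 0))
    (h : ∀ n, B₂.MeetsShrunkenBall r (ρ n) C₁ ∨ B₁.MeetsShrunkenBall r (ρ n) C₂) :
    (C₁ ∩ C₂).Nonempty := by
  refine hC₁.inter_nonempty_of_forall_exists_dist_lt hC₂ fun ε hε => ?_
  obtain ⟨n, hn⟩ := (hρ.eventually (gt_mem_nhds (half_pos hε))).exists
  rcases h n with h | h
  · obtain ⟨x, hx, y, hy, hxy⟩ := h.exists_dist_le hB₂ hr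
    exact ⟨x, hx, y, hy, by linarith⟩
  · obtain ⟨y, hy, x, hx, hxy⟩ := h.exists_dist_le hB₁ hr
    exact ⟨x, hx, y, hy, by rw [dist_comm]; linarith⟩

theorem meetsShrunkenBall_of_h_lt (hCb : IsCompact Cb) (hCbne : Cb.Nonempty)
    (hr : r ∈ Ioo (0 : ℝ) (1 / 2)) {L J : List ℕ} {j : ℕ} (hJ : Ba.valid J)
    (hj : j < Ba.numChildren J) {x : E} (hxL : dist x (Bb.center L) ≤ (1 - 2 * r) * Bb.radius L)
    (hxJ : x ∈ Ba.ball (J ++ [j])) (hJj : Ba.radius (J ++ [j]) < r * Bb.radius L)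
    (hh : Bb.h Cb L < (1 - 2 * r) * Ba.minChildRadius J) :
    Ba.MeetsShrunkenBall r (r * Bb.radius L) Cb := by
  have hcL : Ba.center (J ++ [j]) ∈ Bb.ball L := by
    have := mem_closedBall'.1 hxJ
    rw [ball, mem_closedBall]
    nlinarith [dist_triangle (Ba.center (J ++ [j])) x (Bb.center L), Bb.radius_pos L, hr.1]
  obtain ⟨w, hw, hcw⟩ := exists_dist_le_h hCb hCbne hcL
  refine ⟨J ++ [j], hJ.append_singleton hj, hJj.le, w, hw, ?_⟩
  rw [mem_closedBall, dist_comm]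
  have := Ba.minChildRadius_le hj
  nlinarith [hr.2]

section NormedSpace

variable [NormedSpace ℝ E]

theorem radius_le_radius_nil [Nontrivial E] {L : List ℕ} (hL : B.valid L) :
    B.radius L ≤ B.radius [] :=
  le_of_closedBall_subset_closedBall (hL.ball_subset_ball_take 0) (B.radius_pos L).le

theorem meetsShrunkenBall_child_of_h_le [Nontrivial E] (hCa : IsCompact Ca)
    (hUb : Bb.UniformlyDense r) (hr : r ∈ Ioo (0 : ℝ) (1 / 2)) {L J : List ℕ} (hL : Bb.valid L)
    {x : E} (hxa : x ∈ Ca) (hxL : dist x (Bb.center L) ≤ (1 - 2 * r) * Bb.radius L)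
    (hxJ : x ∈ Ba.ball J) (hJ : r * Bb.radius L ≤ Ba.radius J)
    (hh : Ba.h Ca J ≤ (1 - 2 * r) * Bb.minChildRadius L) :
    Bb.MeetsShrunkenBall r (r * Bb.radius L) Ca := by
  have hρL := Bb.radius_pos L
  obtain ⟨z, hzJ, hzx⟩ :=
    exists_closedBall_subset_closedBall_dist_le hxJ (by nlinarith [hr.1]) hJ
  have hzL : closedBall z (r * Bb.radius L) ⊆ Bb.ball L := by
    refine closedBall_subset_closedBall' ?_
    linarith [dist_triangle z x (Bb.center L)]
  obtain ⟨i, hi, hiz⟩ := hUb L hL z _ hzL le_rfl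
  obtain ⟨y, hy, hcy⟩ := exists_dist_le_h hCa ⟨x, hxa⟩ (hzJ (hiz (mem_closedBall_self
    (Bb.radius_pos _).le)))
  refine ⟨L ++ [i], hL.append_singleton hi,
    le_of_closedBall_subset_closedBall hiz (Bb.radius_pos _).le, y, hy, ?_⟩
  rw [mem_closedBall, dist_comm]
  have := Bb.minChildRadius_le hi
  nlinarith [hr.2]

theorem MeetsShrunkenBall.step [Nontrivial E] (h : Bb.MeetsShrunkenBall r ρ Ca)
    (hCa : IsCompact Ca) (hCb : IsCompact Cb) (hCbne : Cb.Nonempty) (hBa : Ba.IsSystemFor Ca)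
    (hUb : Bb.UniformlyDense r) (hr : r ∈ Ioo (0 : ℝ) (1 / 2))
    (hτ : ENNReal.ofReal (1 / (1 - 2 * r) ^ 2) ≤ Ba.thickness Ca * Bb.thickness Cb)
    (hroot : r * Bb.radius [] ≤ Ba.radius []) :
    Bb.MeetsShrunkenBall r (r * ρ) Ca ∨ Ba.MeetsShrunkenBall r (r * ρ) Cb := by
  obtain ⟨L, hL, hLρ, x, hxa, hxL⟩ := h
  have hrL : r * Bb.radius L ≤ r * ρ := mul_le_mul_of_nonneg_left hLρ hr.1.le
  obtain ⟨J, j, hJ, hj, hxJj, hJr, hJj⟩ := hBa.exists_radius_child_lt_le_radius hxa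
    (mul_pos hr.1 (Bb.radius_pos L))
    (hroot.trans' (mul_le_mul_of_nonneg_left (radius_le_radius_nil hL) hr.1.le))
  rcases h_le_or_h_lt_of_thickness (by linarith [hr.2]) hτ hJ hL with hh | hh
  · exact .inl <| (meetsShrunkenBall_child_of_h_le hCa hUb hr hL hxa hxL
      (Ba.child_subset J j hj hxJj) hJr hh).mono hrL
  · exact .inr <| (meetsShrunkenBall_of_h_lt hCb hCbne hr hJ hj hxL hxJj hJj hh).mono hrL

end NormedSpace

end BallSystem

/-- **Gap Lemma.** Let `C₁`, `C₂` be compact sets in `ℝ^d` (a finite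
dimensional real normed space) with systems of balls `B₁`, `B₂`, and `r ∈ (0, 1/2)`.
If (i) `τ(C₁)·τ(C₂) ≥ 1/(1-2r)²`, (ii) `C₁` meets `(1-2r)S²_∅`, (iii) the root radii are
comparable (`rad S¹_∅ ≥ r·rad S²_∅` and `rad S²_∅ ≥ r·rad S¹_∅`), and (iv) both systems
are `r`-uniformly dense, then `C₁ ∩ C₂ ≠ ∅`. -/
theorem gap_lemma {E : Type*} [NormedAddCommGroup E] [NormedSpace ℝ E]
    [FiniteDimensional ℝ E]
    (C₁ C₂ : Set E) (hC₁ : IsCompact C₁) (hC₂ : IsCompact C₂)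
    (B₁ B₂ : BallSystem E) (hB₁ : B₁.IsSystemFor C₁) (hB₂ : B₂.IsSystemFor C₂)
    (r : ℝ) (hr : r ∈ Set.Ioo (0 : ℝ) (1/2))
    (hτ : ENNReal.ofReal (1 / (1 - 2*r)^2) ≤ B₁.thickness C₁ * B₂.thickness C₂)
    (h0 : (C₁ ∩ Metric.closedBall (B₂.center []) ((1 - 2*r) * B₂.radius [])).Nonempty)
    (h0b₁ : r * B₂.radius [] ≤ B₁.radius [])
    (h0b₂ : r * B₁.radius [] ≤ B₂.radius [])
    (hU₁ : B₁.UniformlyDense r) (hU₂ : B₂.UniformlyDense r) :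
    (C₁ ∩ C₂).Nonempty := by
  have : CompleteSpace E := FiniteDimensional.complete ℝ E
  have hC₁ne : C₁.Nonempty := h0.mono inter_subset_left
  obtain ⟨y, hy, -⟩ := hB₂.exists_mem_ball B₂.valid_nil
  rcases subsingleton_or_nontrivial E with hE | hE
  · obtain ⟨x, hx⟩ := hC₁ne
    exact ⟨x, hx, Subsingleton.elim y x ▸ hy⟩
  have hτ' := mul_comm (B₁.thickness C₁) _ ▸ hτ
  have hshrink : ∀ n : ℕ, B₂.MeetsShrunkenBall r (r ^ n * B₂.radius []) C₁ ∨
      B₁.MeetsShrunkenBall r (r ^ n * B₂.radius []) C₂ := by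
    intro n
    induction n with
    | zero => exact .inl ⟨[], B₂.valid_nil, by simp, h0⟩
    | succ n ih =>
      rw [pow_succ', mul_assoc]
      exact ih.elim (·.step hC₁ hC₂ ⟨y, hy⟩ hB₁ hU₂ hr hτ h0b₁)
        fun h => (h.step hC₂ hC₁ hC₁ne hB₂ hU₁ hr hτ' h0b₂).symm
  refine BallSystem.inter_nonempty_of_meetsShrunkenBall hC₁ hC₂.isClosed hB₁ hB₂ hr.1.le ?_ hshrink
  simpa using (tendsto_pow_atTop_nhds_zero_of_lt_one hr.1.le (by linarith [hr.2])).mul_const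
    (B₂.radius [])
end

section
/- Let C ⊆ ℝ^d be a compact set with a system of balls {S_I}. Then for every word I and every point x ∈ S_I, one has dist(x, C ∩ S_I) ≤ 2 h_I. -/
open Metric Set Filter
open scoped ENNReal

section Aux

variable {E : Type*} [NormedAddCommGroup E]

lemma BallSystem.valid_take (B : BallSystem E) {L : List ℕ} (hL : B.valid L) (n : ℕ) :
    B.valid (L.take n) := by
  intro m
  have hm2 : m.1 < min n L.length := by simpa using m.2
  have hm : m.1 < L.length := lt_of_lt_of_le hm2 (min_le_right _ _)
  have h1 : (L.take n).get m = L.get ⟨m.1, hm⟩ := by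
    simp [List.get_eq_getElem, List.getElem_take]
  have h2 : (L.take n).take m.1 = L.take m.1 := by
    rw [List.take_take]
    congr 1
    omega
  rw [h1, h2]
  exact hL ⟨m.1, hm⟩

lemma BallSystem.valid_append (B : BallSystem E) {K : List ℕ} {i : ℕ}
    (hK : B.valid K) (hi : i < B.numChildren K) : B.valid (K ++ [i]) := by
  intro n
  have hn : n.1 < K.length + 1 := by simpa using n.2
  rcases lt_or_eq_of_le (Nat.lt_succ_iff.mp hn) with h | h
  · have h1 : (K ++ [i]).get n = K.get ⟨n.1, h⟩ := by
      simp [List.get_eq_getElem, List.getElem_append_left, h]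
    have h2 : (K ++ [i]).take n.1 = K.take n.1 := by
      rw [List.take_append_of_le_length h.le]
    rw [h1, h2]
    exact hK ⟨n.1, h⟩
  · have h1 : (K ++ [i]).get n = i := by
      simp [List.get_eq_getElem, h, List.getElem_append_right, le_refl]
    have h2 : (K ++ [i]).take n.1 = K := by
      rw [h, List.take_left]
    rw [h1, h2]
    exact hi

lemma BallSystem.ball_take_succ (B : BallSystem E) {L : List ℕ} (hL : B.valid L) {k : ℕ}
    (hk : k < L.length) : B.ball (L.take (k + 1)) ⊆ B.ball (L.take k) := by
  have h : L.take (k + 1) = L.take k ++ [L.get ⟨k, hk⟩] := by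
    rw [List.take_succ]
    simp [List.getElem?_eq_getElem hk]
  rw [h]
  exact B.child_subset _ _ (hL ⟨k, hk⟩)

lemma BallSystem.ball_subset_ball_take (B : BallSystem E) {L : List ℕ} (hL : B.valid L)
    (n : ℕ) : B.ball L ⊆ B.ball (L.take n) := by
  rcases le_or_gt L.length n with h | h
  · rw [List.take_of_length_le h]
  · have key : ∀ m : ℕ, n ≤ m → m ≤ L.length → B.ball (L.take m) ⊆ B.ball (L.take n) := by
      intro m
      induction m with
      | zero => intro h1 _; simp_all
      | succ m ih =>
        intro h1 h2
        rcases Nat.lt_or_ge n (m + 1) with h3 | h3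
        · exact (B.ball_take_succ hL (by omega)).trans (ih (by omega) (by omega))
        · have : n = m + 1 := by omega
          subst this; rfl
    have := key L.length h.le le_rfl
    rwa [List.take_length] at this

lemma ofFn_getD_eq (I : List ℕ) (n : ℕ) (h : I.length ≤ n) :
    (List.ofFn fun k : Fin n => I.getD k 0) = I ++ List.replicate (n - I.length) 0 := by
  apply List.ext_getElem
  · simp; omega
  · intro k h1 h2
    simp only [List.getElem_ofFn]
    rcases lt_or_ge k I.length with hk | hk
    · rw [List.getElem_append_left hk, List.getD_eq_getElem I 0 hk]
    · rw [List.getElem_append_right hk, List.getElem_replicate,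
        List.getD_eq_default I 0 hk]

lemma BallSystem.exists_mem_inter [CompleteSpace E] (C : Set E) (B : BallSystem E)
    (hB : B.IsSystemFor C) (I : List ℕ) (hI : B.valid I) :
    ∃ z, z ∈ C ∩ B.ball I := by
  set J : ℕ → List ℕ := fun m => I ++ List.replicate m 0 with hJ
  have hJlen : ∀ m, (J m).length = I.length + m := by simp [hJ]
  have hJsucc : ∀ m, J (m + 1) = J m ++ [0] := by
    intro m
    simp [hJ, List.replicate_succ' (n := m), List.append_assoc]
  have hJvalid : ∀ m, B.valid (J m) := by
    intro m
    induction m with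
    | zero => simpa [hJ] using hI
    | succ m ih => rw [hJsucc]; exact B.valid_append ih (B.numChildren_pos _)
  have hJsub : ∀ m, B.ball (J (m + 1)) ⊆ B.ball (J m) := by
    intro m; rw [hJsucc]; exact B.child_subset _ _ (B.numChildren_pos _)
  have hJmono : ∀ n m : ℕ, n ≤ m → B.ball (J m) ⊆ B.ball (J n) := by
    intro n m h
    induction h with
    | refl => exact subset_rfl
    | step h ih => exact fun z hz => ih (hJsub _ hz)
  -- radius tends to zero
  have hr0 : Tendsto (fun m => B.radius (J m)) atTop (nhds 0) := by
    have hrt := B.radius_tendsto (fun k => I.getD k 0)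
    have hcomp := hrt.comp (tendsto_add_atTop_nat I.length)
    refine hcomp.congr fun m => ?_
    simp only [Function.comp_apply]
    congr 1
    rw [ofFn_getD_eq I (m + I.length) (by omega)]
    simp [hJ]
  set f : ℕ → E := fun m => B.center (J m) with hf
  have hmemf : ∀ n m, n ≤ m → f m ∈ B.ball (J n) := fun n m h =>
    hJmono n m h (Metric.mem_closedBall_self (B.radius_pos _).le)
  have hcauchy : CauchySeq f := by
    apply cauchySeq_of_le_tendsto_0 (fun N => 2 * B.radius (J N)) ?_
      (by simpa using hr0.const_mul 2)
    intro n m N hn hm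
    have h1 := hmemf N n hn
    have h2 := hmemf N m hm
    rw [BallSystem.ball, Metric.mem_closedBall] at h1 h2
    calc dist (f n) (f m) ≤ dist (f n) (B.center (J N)) + dist (B.center (J N)) (f m) :=
          dist_triangle _ _ _
      _ ≤ 2 * B.radius (J N) := by rw [dist_comm (B.center (J N))]; linarith
  obtain ⟨z, hz⟩ := cauchySeq_tendsto_of_complete hcauchy
  have hzball : ∀ N, z ∈ B.ball (J N) := by
    intro N
    have : ∀ᶠ m in atTop, f m ∈ B.ball (J N) :=
      eventually_atTop.2 ⟨N, fun m hm => hmemf N m hm⟩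
    exact Metric.isClosed_closedBall.mem_of_tendsto hz this
  refine ⟨z, ?_, by simpa [hJ] using hzball 0⟩
  rw [hB]
  rw [Set.mem_iInter]
  intro n
  have hmem : (J n).take n ∈ {K : List ℕ | B.valid K ∧ K.length = n} :=
    ⟨B.valid_take (hJvalid n) n, by simp [hJlen]⟩
  exact Set.mem_biUnion hmem (B.ball_subset_ball_take (hJvalid n) n (hzball n))

end Aux

/-- For a compact set `C` with a system of balls `{S_I}`, every point
`x ∈ S_I` satisfies `dist(x, C ∩ S_I) ≤ 2 h_I`. -/
theorem infDist_inter_le_two_mul_h {E : Type*} [NormedAddCommGroup E] [NormedSpace ℝ E]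
    [FiniteDimensional ℝ E]
    (C : Set E) (hC : IsCompact C) (B : BallSystem E) (hB : B.IsSystemFor C)
    (I : List ℕ) (hI : B.valid I) (x : E) (hx : x ∈ B.ball I) :
    infDist x (C ∩ B.ball I) ≤ 2 * B.h C I := by
  obtain ⟨z, hzC, hzI⟩ := B.exists_mem_inter C hB I hI
  set c := B.center I with hc
  set ρ := B.radius I with hρ
  have hρpos : 0 < ρ := B.radius_pos I
  set h := B.h C I with hh
  have hball : B.ball I = Metric.closedBall c ρ := rfl
  -- the sup defining h is bounded above
  have hbdd : BddAbove (Set.range fun w => ⨆ _ : w ∈ B.ball I, infDist w C) := by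
    refine ⟨infDist c C + ρ, ?_⟩
    rintro _ ⟨w, rfl⟩
    dsimp only
    by_cases hw : w ∈ B.ball I
    · rw [ciSup_pos hw]
      have hd : dist w c ≤ ρ := by rwa [hball, Metric.mem_closedBall] at hw
      have := infDist_le_infDist_add_dist (x := w) (y := c) (s := C)
      linarith
    · haveI : IsEmpty (w ∈ B.ball I) := ⟨hw⟩
      rw [Real.iSup_of_isEmpty]
      have := infDist_nonneg (s := C) (x := c)
      linarith
  have hle : ∀ w ∈ B.ball I, infDist w C ≤ h := by
    intro w hw
    have h1 : infDist w C = ⨆ _ : w ∈ B.ball I, infDist w C := (ciSup_pos (f := fun _ => infDist w C) hw).symm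
    rw [hh, BallSystem.h, h1]
    exact le_ciSup hbdd w
  have hnn : 0 ≤ h := le_trans infDist_nonneg (hle x hx)
  have hxc : dist x c ≤ ρ := by rwa [hball, Metric.mem_closedBall] at hx
  have hzc : dist z c ≤ ρ := by rwa [hball, Metric.mem_closedBall] at hzI
  rcases le_or_gt ρ h with hcase | hcase
  · have : dist x z ≤ 2 * ρ := by
      calc dist x z ≤ dist x c + dist c z := dist_triangle _ _ _
        _ ≤ 2 * ρ := by rw [dist_comm c z]; linarith
    exact le_trans (infDist_le_dist_of_mem ⟨hzC, hzI⟩) (by linarith)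
  · obtain ⟨v, hxv, hvsub⟩ : ∃ v, dist x v ≤ h ∧ Metric.closedBall v h ⊆ B.ball I := by
      rcases le_or_gt (dist x c) h with hr | hr
      · exact ⟨c, hr, by rw [hball]; exact Metric.closedBall_subset_closedBall hcase.le⟩
      · set r := dist x c with hrdef
        have hr0 : (0 : ℝ) < r := lt_of_le_of_lt hnn hr
        refine ⟨x + (h / r) • (c - x), ?_, ?_⟩
        · have h1 : x - (x + (h / r) • (c - x)) = -((h / r) • (c - x)) := by abel
          rw [dist_eq_norm, h1, norm_neg, norm_smul, Real.norm_eq_abs,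
            abs_of_nonneg (by positivity)]
          rw [show ‖c - x‖ = r by rw [hrdef, dist_eq_norm, ← norm_neg]; congr 1; abel]
          rw [div_mul_cancel₀ _ (ne_of_gt hr0)]
        · have hvc : dist (x + (h / r) • (c - x)) c = r - h := by
            have h2 : x + (h / r) • (c - x) - c = (1 - h / r) • (x - c) := by module
            rw [dist_eq_norm, h2, norm_smul, Real.norm_eq_abs]
            have hle1 : h / r ≤ 1 := (div_le_one hr0).mpr hr.le
            rw [abs_of_nonneg (by linarith)]
            rw [show ‖x - c‖ = r from (dist_eq_norm x c).symm]
            field_simp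
          rw [hball]
          refine Metric.closedBall_subset_closedBall' ?_
          rw [hvc]
          linarith
    have hv : v ∈ B.ball I := hvsub (Metric.mem_closedBall_self hnn)
    obtain ⟨y, hyC, hy⟩ := hC.exists_infDist_eq_dist ⟨z, hzC⟩ v
    have hdv : dist v y ≤ h := by rw [← hy]; exact hle v hv
    have hyI : y ∈ B.ball I := hvsub (by rwa [Metric.mem_closedBall, dist_comm])
    calc infDist x (C ∩ B.ball I) ≤ dist x y := infDist_le_dist_of_mem ⟨hyC, hyI⟩
      _ ≤ dist x v + dist v y := dist_triangle _ _ _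
      _ ≤ 2 * h := by linarith
end

section
/- Let C ⊆ ℝ be compact, let a, b ∈ C with a < b, and set S = [a, b]. Assume S ⊄ C, so that the connected components of S ∖ C (the gaps of C in S) are nonempty bounded open intervals; let G be a component of S ∖ C of maximal length, and write S ∖ G = L ∪ R, where L and R are the closed intervals to the left and right of G. Then max_{x ∈ S} dist(x, C) = |G|/2, and consequently min{|L|, |R|}/|G| = min{rad(L), rad(R)} / max_{x ∈ S} dist(x, C). (Here |J| denotes the length of an interval J and rad(J) = |J|/2.) In particular, in the real line the thickness of a system of balls produced by successively removing the gaps of C in decreasing order of length coincides with the Newhouse thickness τ_N(C) = inf_n min{|L_n|, |R_n|}/|G_n|. -/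
open Metric Set

/-- Let `C ⊆ ℝ` be compact, `a, b ∈ C`, `a < b`, `S = [a,b]`, and
suppose `S ⊄ C`. Let `G = (g₁, g₂)` be a gap of `C` in `S` (a connected component of
`S \ C`, so `Ioo g₁ g₂ ⊆ S \ C` with endpoints `g₁, g₂ ∈ C`) of maximal length. Writing
`L = [a, g₁]`, `R = [g₂, b]`, we have `max_{x ∈ S} dist(x, C) = |G|/2` and consequently
`min(|L|,|R|)/|G| = min(rad L, rad R)/max_{x ∈ S} dist(x, C)`. -/
theorem max_dist_eq_half_max_gap {C : Set ℝ} (hC : IsCompact C) {a b : ℝ}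
    (ha : a ∈ C) (hb : b ∈ C) (hab : a < b) (hnot : ¬ Set.Icc a b ⊆ C)
    {g₁ g₂ : ℝ} (hg : g₁ < g₂) (hga : a ≤ g₁) (hgb : g₂ ≤ b)
    (hgap : Set.Ioo g₁ g₂ ⊆ Set.Icc a b \ C) (hg₁C : g₁ ∈ C) (hg₂C : g₂ ∈ C)
    (hmax : ∀ c d : ℝ, a ≤ c → d ≤ b → Set.Ioo c d ⊆ Set.Icc a b \ C → d - c ≤ g₂ - g₁) :
    (⨆ x ∈ Set.Icc a b, infDist x C) = (g₂ - g₁) / 2 ∧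
    min (g₁ - a) (b - g₂) / (g₂ - g₁)
      = min ((g₁ - a) / 2) ((b - g₂) / 2) / (⨆ x ∈ Set.Icc a b, infDist x C) := by
  have hCne : C.Nonempty := ⟨a, ha⟩
  -- upper bound: every x in [a,b] has infDist x C ≤ (g₂-g₁)/2
  have hub : ∀ x ∈ Set.Icc a b, infDist x C ≤ (g₂ - g₁) / 2 := by
    intro x hx
    set d := infDist x C with hd
    have hd0 : 0 ≤ d := infDist_nonneg
    have h1 : a ≤ x - d := by
      have : d ≤ dist x a := infDist_le_dist_of_mem ha
      rw [Real.dist_eq, abs_of_nonneg (by linarith [hx.1])] at this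
      linarith
    have h2 : x + d ≤ b := by
      have : d ≤ dist x b := infDist_le_dist_of_mem hb
      rw [Real.dist_eq, abs_of_nonpos (by linarith [hx.2])] at this
      linarith
    have hsub : Set.Ioo (x - d) (x + d) ⊆ Set.Icc a b \ C := by
      intro y hy
      refine ⟨⟨le_trans h1 hy.1.le, le_trans hy.2.le h2⟩, fun hyC => ?_⟩
      obtain ⟨hy1, hy2⟩ := hy
      have h3 : d ≤ dist x y := infDist_le_dist_of_mem hyC
      rw [Real.dist_eq] at h3
      have h4 : |x - y| < d := abs_lt.mpr ⟨by linarith, by linarith⟩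
      linarith
    have := hmax (x - d) (x + d) h1 h2 hsub
    linarith
  -- midpoint attains (g₂-g₁)/2
  set m := (g₁ + g₂) / 2 with hm
  have hmIcc : m ∈ Set.Icc a b := ⟨by simp [hm]; linarith, by simp [hm]; linarith⟩
  have hlow : (g₂ - g₁) / 2 ≤ infDist m C := by
    by_contra hcon
    push_neg at hcon
    obtain ⟨c, hc, hdc⟩ := (infDist_lt_iff hCne).mp hcon
    rw [Real.dist_eq] at hdc
    have habs : (g₂ - g₁) / 2 ≤ |m - c| := by
      rcases le_or_gt c g₁ with h | h
      · rw [abs_of_nonneg (by simp only [hm]; linarith)]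
        simp only [hm]; linarith
      · rcases le_or_gt g₂ c with h' | h'
        · rw [abs_of_nonpos (by simp only [hm]; linarith)]
          simp only [hm]; linarith
        · exact absurd hc (hgap ⟨h, h'⟩).2
    linarith
  have hEq : (⨆ x ∈ Set.Icc a b, infDist x C) = (g₂ - g₁) / 2 := by
    apply le_antisymm
    · apply Real.iSup_le _ (by linarith)
      intro x
      apply Real.iSup_le _ (by linarith)
      intro hx
      exact hub x hx
    · have hbdd : BddAbove (Set.range fun x => ⨆ _ : x ∈ Set.Icc a b, infDist x C) := by
        refine ⟨(g₂ - g₁) / 2, ?_⟩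
        rintro _ ⟨x, rfl⟩
        exact Real.iSup_le (fun hx => hub x hx) (by linarith)
      calc (g₂ - g₁) / 2 ≤ infDist m C := hlow
        _ = ⨆ _ : m ∈ Set.Icc a b, infDist m C :=
          (ciSup_pos (f := fun _ : m ∈ Set.Icc a b => infDist m C) hmIcc).symm
        _ ≤ ⨆ x ∈ Set.Icc a b, infDist x C := le_ciSup hbdd m
  refine ⟨hEq, ?_⟩
  rw [hEq]
  have h2 : min ((g₁ - a) / 2) ((b - g₂) / 2) = min (g₁ - a) (b - g₂) / 2 := by
    rcases le_total (g₁ - a) (b - g₂) with h | h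
    · rw [min_eq_left h, min_eq_left (by linarith)]
    · rw [min_eq_right h, min_eq_right (by linarith)]
  rw [h2]
  have hne : g₂ - g₁ ≠ 0 := by linarith
  field_simp
end

section
/- For the set C_{ℓ,n} with its natural system of balls {S_I}, the thickness satisfies τ(C_{ℓ,n}, {S_I}) = ℓ/g = ℓ(n − 1)/(2 − nℓ). -/
open Metric Set
open scoped ENNReal

/-- Composition `f_{i₁} ∘ ⋯ ∘ f_{i_k}` of the maps of an IFS along the word `I`. -/
def wordMap {E : Type*} {K : Type*} (f : K → E → E) (I : List K) : E → E :=
  (I.map f).foldl (· ∘ ·) id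

noncomputable def thkPhi (n : ℕ) (ℓ g : ℝ) (k : Fin n) (t : ℝ) : ℝ :=
  ℓ / 2 * t + (-1 + (k : ℝ) * (ℓ + g) + ℓ / 2)

instance thkCompAssoc {E : Type*} : Std.Associative (fun (a b : E → E) => a ∘ b) :=
  ⟨fun _ _ _ => rfl⟩

theorem thk_wordMap_nil {E K : Type*} (f : K → E → E) : wordMap f [] = id := rfl

theorem thk_foldl_comp_eq {E : Type*} (a : E → E) (L : List (E → E)) :
    L.foldl (· ∘ ·) a = a ∘ L.foldl (· ∘ ·) id := by
  conv_lhs => rw [show a = a ∘ id from rfl]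
  exact List.foldl_assoc

theorem thk_wordMap_cons {E K : Type*} (f : K → E → E) (k : K) (I : List K) :
    wordMap f (k :: I) = f k ∘ wordMap f I := by
  show List.foldl (· ∘ ·) (id ∘ f k) (I.map f) = f k ∘ List.foldl (· ∘ ·) id (I.map f)
  rw [thk_foldl_comp_eq (id ∘ f k)]
  rfl

variable {n : ℕ} {ℓ g : ℝ}

section basic
variable (hn : 2 ≤ n) (hl0 : 0 < ℓ) (hg0 : 0 < g)
  (hkey : ((n : ℝ) - 1) * (ℓ + g) = 2 - ℓ)

include hn hl0 hg0 hkey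

theorem thk_ell_lt_one : ℓ < 1 := by
  have hn1 : (1 : ℝ) ≤ (n : ℝ) - 1 := by
    have : (2 : ℝ) ≤ (n : ℝ) := by exact_mod_cast hn
    linarith
  have h1 : ℓ + g ≤ ((n : ℝ) - 1) * (ℓ + g) := le_mul_of_one_le_left (by linarith) hn1
  linarith [hkey ▸ h1]

theorem thk_kcast_le (k : Fin n) : (k : ℝ) ≤ (n : ℝ) - 1 := by
  have : (k.val : ℝ) + 1 ≤ (n : ℝ) := by exact_mod_cast k.isLt
  linarith

theorem thk_c_bound (k : Fin n) : |(-1 + (k : ℝ) * (ℓ + g) + ℓ / 2)| ≤ 1 - ℓ / 2 := by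
  have hk0 : (0 : ℝ) ≤ (k : ℝ) := by positivity
  have hk1 : (k : ℝ) * (ℓ + g) ≤ ((n : ℝ) - 1) * (ℓ + g) :=
    mul_le_mul_of_nonneg_right (thk_kcast_le hn hl0 hg0 hkey k) (by linarith)
  rw [abs_le]
  constructor
  · nlinarith
  · nlinarith [hkey ▸ hk1]

theorem thkPhi_abs (k : Fin n) {t : ℝ} (ht : |t| ≤ 1) : |thkPhi n ℓ g k t| ≤ 1 := by
  have h1 : |ℓ / 2 * t| ≤ ℓ / 2 := by
    rw [abs_mul, abs_of_pos (by linarith : (0:ℝ) < ℓ / 2)]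
    nlinarith [abs_nonneg t]
  calc |thkPhi n ℓ g k t| ≤ |ℓ / 2 * t| + |(-1 + (k : ℝ) * (ℓ + g) + ℓ / 2)| := abs_add_le _ _
    _ ≤ ℓ / 2 + (1 - ℓ / 2) := add_le_add h1 (thk_c_bound hn hl0 hg0 hkey k)
    _ = 1 := by ring

theorem thkPhi_lb (k : Fin n) {t : ℝ} (ht : -1 ≤ t) :
    -1 + (k : ℝ) * (ℓ + g) ≤ thkPhi n ℓ g k t := by
  have : -(ℓ / 2) ≤ ℓ / 2 * t := by nlinarith
  unfold thkPhi; nlinarith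

theorem thkPhi_ub (k : Fin n) {t : ℝ} (ht : t ≤ 1) :
    thkPhi n ℓ g k t ≤ -1 + (k : ℝ) * (ℓ + g) + ℓ := by
  have : ℓ / 2 * t ≤ ℓ / 2 := by nlinarith
  unfold thkPhi; nlinarith

theorem thk_wphi_abs : ∀ (J : List (Fin n)) {t : ℝ}, |t| ≤ 1 →
    |wordMap (thkPhi n ℓ g) J t| ≤ 1 := by
  intro J
  induction J with
  | nil => intro t ht; exact ht
  | cons k J ih =>
    intro t ht
    rw [thk_wordMap_cons]
    exact thkPhi_abs hn hl0 hg0 hkey k (ih ht)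

theorem thk_wphi_affine : ∀ (J : List (Fin n)) (t : ℝ),
    wordMap (thkPhi n ℓ g) J t = (ℓ / 2) ^ J.length * t + wordMap (thkPhi n ℓ g) J 0 := by
  intro J
  induction J with
  | nil => intro t; simp [thk_wordMap_nil]
  | cons k J ih =>
    intro t
    simp only [thk_wordMap_cons, Function.comp_apply]
    rw [ih t, ih 0]
    unfold thkPhi
    rw [List.length_cons]
    ring

theorem thk_s0_abs : |(-1 + ℓ + g / 2 : ℝ)| ≤ 1 := by
  have h := thk_ell_lt_one hn hl0 hg0 hkey
  have hn1 : (1 : ℝ) ≤ (n : ℝ) - 1 := by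
    have : (2 : ℝ) ≤ (n : ℝ) := by exact_mod_cast hn
    linarith
  have h1 : ℓ + g ≤ ((n : ℝ) - 1) * (ℓ + g) := le_mul_of_one_le_left (by linarith) hn1
  rw [abs_le]; constructor <;> nlinarith [hkey ▸ h1]

theorem thk_lower_key : ∀ (J J' : List (Fin n)), J'.length = J.length + 1 → ∀ {t : ℝ}, |t| ≤ 1 →
    (ℓ / 2) ^ J.length * (g / 2) ≤
      |wordMap (thkPhi n ℓ g) J (-1 + ℓ + g / 2) - wordMap (thkPhi n ℓ g) J' t| := by
  intro J
  induction J with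
  | nil =>
    intro J' hlen t ht
    match J', hlen with
    | [k'], _ =>
      rw [thk_wordMap_nil, List.length_nil, pow_zero, one_mul]
      rw [show wordMap (thkPhi n ℓ g) [k'] t = thkPhi n ℓ g k' t from rfl]
      rcases Nat.eq_zero_or_pos k'.val with hk | hk
      · have hub : thkPhi n ℓ g k' t ≤ -1 + (k' : ℝ) * (ℓ + g) + ℓ := thkPhi_ub hn hl0 hg0 hkey k' (abs_le.1 ht).2
        have : (k' : ℝ) = 0 := by exact_mod_cast hk
        rw [this] at hub
        have : g / 2 ≤ (-1 + ℓ + g / 2) - thkPhi n ℓ g k' t := by linarith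
        exact this.trans (le_abs_self _)
      · have hlb : -1 + (k' : ℝ) * (ℓ + g) ≤ thkPhi n ℓ g k' t := thkPhi_lb hn hl0 hg0 hkey k' (abs_le.1 ht).1
        have hk1 : (1 : ℝ) ≤ (k' : ℝ) := by exact_mod_cast hk
        have hgl : (0:ℝ) < ℓ + g := by linarith
        have : g / 2 ≤ -((-1 + ℓ + g / 2) - thkPhi n ℓ g k' t) := by nlinarith
        exact this.trans (neg_le_abs _)
  | cons k J₀ ih =>
    intro J' hlen t ht
    match J', hlen with
    | k'' :: J₁, hlen =>
      have hlen1 : J₁.length = J₀.length + 1 := by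
        simpa using hlen
      simp only [thk_wordMap_cons, Function.comp_apply]
      set a := wordMap (thkPhi n ℓ g) J₀ (-1 + ℓ + g / 2) with ha
      set b := wordMap (thkPhi n ℓ g) J₁ t with hb
      have haab : |a| ≤ 1 := thk_wphi_abs hn hl0 hg0 hkey J₀ (thk_s0_abs hn hl0 hg0 hkey)
      have hbab : |b| ≤ 1 := thk_wphi_abs hn hl0 hg0 hkey J₁ ht
      by_cases hkk : k = k''
      · subst hkk
        have hdiff : thkPhi n ℓ g k a - thkPhi n ℓ g k b = ℓ / 2 * (a - b) := by
          unfold thkPhi; ring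
        rw [hdiff, abs_mul, abs_of_pos (by linarith : (0:ℝ) < ℓ / 2)]
        rw [List.length_cons, pow_succ]
        calc (ℓ / 2) ^ J₀.length * (ℓ / 2) * (g / 2)
            = ℓ / 2 * ((ℓ / 2) ^ J₀.length * (g / 2)) := by ring
          _ ≤ ℓ / 2 * |a - b| := by
              apply mul_le_mul_of_nonneg_left _ (by linarith)
              exact ih J₁ hlen1 ht
      · -- different first letters: separation at least g
        have hl1 : ℓ < 1 := thk_ell_lt_one hn hl0 hg0 hkey
        have hsep : g ≤ |thkPhi n ℓ g k a - thkPhi n ℓ g k'' b| := by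
          rcases lt_or_gt_of_ne (fun h : k.val = k''.val => hkk (Fin.ext h)) with h | h
          · have h1 : (k.val : ℝ) + 1 ≤ (k''.val : ℝ) := by exact_mod_cast h
            have h2 : thkPhi n ℓ g k a ≤ -1 + (k : ℝ) * (ℓ + g) + ℓ := thkPhi_ub hn hl0 hg0 hkey k (abs_le.1 haab).2
            have h3 : -1 + (k'' : ℝ) * (ℓ + g) ≤ thkPhi n ℓ g k'' b := thkPhi_lb hn hl0 hg0 hkey k'' (abs_le.1 hbab).1
            have : g ≤ -(thkPhi n ℓ g k a - thkPhi n ℓ g k'' b) := by nlinarith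
            exact this.trans (neg_le_abs _)
          · have h1 : (k''.val : ℝ) + 1 ≤ (k.val : ℝ) := by exact_mod_cast h
            have h2 : thkPhi n ℓ g k'' b ≤ -1 + (k'' : ℝ) * (ℓ + g) + ℓ := thkPhi_ub hn hl0 hg0 hkey k'' (abs_le.1 hbab).2
            have h3 : -1 + (k : ℝ) * (ℓ + g) ≤ thkPhi n ℓ g k a := thkPhi_lb hn hl0 hg0 hkey k (abs_le.1 haab).1
            have : g ≤ thkPhi n ℓ g k a - thkPhi n ℓ g k'' b := by nlinarith
            exact this.trans (le_abs_self _)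
        have hpow : (ℓ / 2) ^ (k :: J₀).length ≤ 1 :=
          pow_le_one₀ (by linarith) (by linarith)
        calc (ℓ / 2) ^ (k :: J₀).length * (g / 2) ≤ 1 * (g / 2) :=
              mul_le_mul_of_nonneg_right hpow (by linarith)
          _ ≤ g := by linarith
          _ ≤ _ := hsep

theorem thk_position {x : ℝ} (hx : |x| ≤ 1) :
    ∃ (k : Fin n) (y : ℝ), |y| ≤ 1 ∧
      ((x = thkPhi n ℓ g k y ∧ ((x = -1 ∨ x = 1) → (y = x ∧ thkPhi n ℓ g k y = y)))
        ∨ ((y = -1 ∨ y = 1) ∧ |x - thkPhi n ℓ g k y| ≤ g / 2 ∧ ¬(x = -1 ∨ x = 1))) := by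
  have hl1 : ℓ < 1 := thk_ell_lt_one hn hl0 hg0 hkey
  have hgl : (0:ℝ) < ℓ + g := by linarith
  by_cases hm1 : x = -1
  · refine ⟨⟨0, by omega⟩, -1, by norm_num, Or.inl ⟨?_, fun _ => ⟨by rw [hm1], ?_⟩⟩⟩
    · unfold thkPhi; rw [hm1]; push_cast; ring
    · unfold thkPhi; push_cast; ring
  by_cases hp1 : x = 1
  · refine ⟨⟨n - 1, by omega⟩, 1, by norm_num, Or.inl ⟨?_, fun _ => ⟨by rw [hp1], ?_⟩⟩⟩
    · have hcast : ((⟨n - 1, by omega⟩ : Fin n) : ℝ) = (n : ℝ) - 1 := by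
        simp only [Fin.val_mk]
        have : (1:ℕ) ≤ n := by omega
        push_cast [Nat.cast_sub this]
        ring
      unfold thkPhi; rw [hcast, hkey, hp1]; ring
    · have hcast : ((⟨n - 1, by omega⟩ : Fin n) : ℝ) = (n : ℝ) - 1 := by
        simp only [Fin.val_mk]
        have : (1:ℕ) ≤ n := by omega
        push_cast [Nat.cast_sub this]
        ring
      unfold thkPhi; rw [hcast, hkey]; ring
  -- generic case
  have hnot : ¬(x = -1 ∨ x = 1) := by tauto
  have hx1 : -1 ≤ x := (abs_le.1 hx).1
  have hx2 : x ≤ 1 := (abs_le.1 hx).2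
  set u : ℝ := (x + 1) / (ℓ + g) with hu
  have hu0 : 0 ≤ u := div_nonneg (by linarith) (by linarith)
  set k0 : ℕ := min ⌊u⌋₊ (n - 1) with hk0def
  have hk0n : k0 < n := by omega
  have hk0u : (k0 : ℝ) ≤ u := by
    have h1 : (k0 : ℝ) ≤ (⌊u⌋₊ : ℝ) := by exact_mod_cast Nat.min_le_left _ _
    exact h1.trans (Nat.floor_le hu0)
  have ha : -1 + (k0 : ℝ) * (ℓ + g) ≤ x := by
    have : (k0 : ℝ) * (ℓ + g) ≤ u * (ℓ + g) := mul_le_mul_of_nonneg_right hk0u (by linarith)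
    rw [hu, div_mul_cancel₀ _ (by linarith : ℓ + g ≠ 0)] at this
    linarith
  set a : ℝ := -1 + (k0 : ℝ) * (ℓ + g) with hadef
  by_cases hxa : x ≤ a + ℓ
  · -- interval case
    refine ⟨⟨k0, hk0n⟩, (x - a - ℓ / 2) / (ℓ / 2), ?_, Or.inl ⟨?_, fun h => absurd h hnot⟩⟩
    · rw [abs_le]
      constructor
      · rw [le_div_iff₀ (by linarith : (0:ℝ) < ℓ / 2)]; linarith
      · rw [div_le_one (by linarith : (0:ℝ) < ℓ / 2)]; linarith
    · unfold thkPhi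
      simp only [Fin.val_mk]
      field_simp
      ring
  · -- gap case
    push_neg at hxa
    have hk0lt : k0 < n - 1 := by
      by_contra h
      have hk0eq : k0 = n - 1 := by omega
      have hcast : (k0 : ℝ) = (n : ℝ) - 1 := by
        rw [hk0eq]
        have : (1:ℕ) ≤ n := by omega
        push_cast [Nat.cast_sub this]; ring
      have : a + ℓ = 1 := by rw [hadef, hcast, hkey]; ring
      linarith
    have hfloor : k0 = ⌊u⌋₊ := by
      rcases Nat.lt_or_ge ⌊u⌋₊ (n-1) with h | h
      · omega
      · omega
    have hxup : x < a + (ℓ + g) := by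
      have h1 : u < (⌊u⌋₊ : ℝ) + 1 := Nat.lt_floor_add_one u
      have h2 : u * (ℓ + g) < ((k0 : ℝ) + 1) * (ℓ + g) := by
        apply mul_lt_mul_of_pos_right _ hgl
        rw [hfloor]; exact_mod_cast h1
      rw [hu, div_mul_cancel₀ _ (by linarith : ℓ + g ≠ 0)] at h2
      rw [hadef]; linarith
    by_cases hhalf : x ≤ a + ℓ + g / 2
    · refine ⟨⟨k0, hk0n⟩, 1, by norm_num, Or.inr ⟨Or.inr rfl, ?_, hnot⟩⟩
      have hval : thkPhi n ℓ g ⟨k0, hk0n⟩ 1 = a + ℓ := by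
        unfold thkPhi; simp only [Fin.val_mk]; rw [hadef]; ring
      rw [hval, abs_of_pos (by linarith : (0:ℝ) < x - (a + ℓ))]
      linarith
    · push_neg at hhalf
      have hk1n : k0 + 1 < n := by omega
      refine ⟨⟨k0 + 1, hk1n⟩, -1, by norm_num, Or.inr ⟨Or.inl rfl, ?_, hnot⟩⟩
      have hval : thkPhi n ℓ g ⟨k0 + 1, hk1n⟩ (-1) = a + (ℓ + g) := by
        unfold thkPhi; simp only [Fin.val_mk]; push_cast; rw [hadef]; ring
      rw [hval, abs_of_nonpos (by linarith : x - (a + (ℓ + g)) ≤ 0)]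
      linarith

theorem thk_approx (d : ℕ) : ∀ (m : ℕ) (x : Fin d → ℝ), (∀ j, |x j| ≤ 1) →
    ∃ K : List (Fin d → Fin n), K.length = m ∧ ∃ y : Fin d → ℝ, (∀ j, |y j| ≤ 1) ∧
      ∀ j, |x j - wordMap (thkPhi n ℓ g) (K.map (fun k => k j)) (y j)| ≤ g / 2 ∧
        ((x j = -1 ∨ x j = 1) → wordMap (thkPhi n ℓ g) (K.map (fun k => k j)) (y j) = x j) := by
  intro m
  induction m with
  | zero =>
    intro x hx
    exact ⟨[], rfl, x, hx, fun j => ⟨by simp only [List.map_nil, thk_wordMap_nil, id, sub_self, abs_zero]; positivity, fun _ => rfl⟩⟩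
  | succ m ih =>
    intro x hx
    have hch : ∀ j, ∃ (k : Fin n) (y : ℝ), |y| ≤ 1 ∧
        ((x j = thkPhi n ℓ g k y ∧ ((x j = -1 ∨ x j = 1) → (y = x j ∧ thkPhi n ℓ g k y = y)))
          ∨ ((y = -1 ∨ y = 1) ∧ |x j - thkPhi n ℓ g k y| ≤ g / 2 ∧ ¬(x j = -1 ∨ x j = 1))) :=
      fun j => thk_position hn hl0 hg0 hkey (hx j)
    choose k x' h1 h2 using hch
    obtain ⟨K', hK'len, y, hy, hprop⟩ := ih x' h1
    refine ⟨k :: K', by simp [hK'len], y, hy, fun j => ?_⟩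
    have hmap : ((k :: K').map (fun k => k j)) = k j :: K'.map (fun k => k j) := rfl
    rw [hmap, thk_wordMap_cons, Function.comp_apply]
    set e := wordMap (thkPhi n ℓ g) (K'.map (fun k => k j)) (y j) with he
    have hl1 : ℓ < 1 := thk_ell_lt_one hn hl0 hg0 hkey
    rcases h2 j with ⟨hxe, himp⟩ | ⟨hx'pm, herr, hnot⟩
    · constructor
      · have hdiff : x j - thkPhi n ℓ g (k j) e = ℓ / 2 * (x' j - e) := by
          rw [hxe]; unfold thkPhi; ring
        rw [hdiff, abs_mul, abs_of_pos (by linarith : (0:ℝ) < ℓ / 2)]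
        have := (hprop j).1
        nlinarith [abs_nonneg (x' j - e)]
      · intro hext
        obtain ⟨hyx, hfix⟩ := himp hext
        have hex : e = x' j := by
          apply (hprop j).2
          rw [hyx]; exact hext
        rw [hex, hfix, hyx]
    · have hex : e = x' j := (hprop j).2 hx'pm
      refine ⟨?_, fun h => absurd h hnot⟩
      rw [hex]
      exact herr

end basic

/-- For the equally-spaced self-similar set `C_{ℓ,n} ⊆ (ℝ^d, ℓ^∞)`
with its natural system of balls `S_I` (each child of a level-`m` ball having radius
`(ℓ/2)^{m+1}`), the thickness `τ = inf_I min_k rad(S_{I,k}) / h_I` equals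
`ℓ/g = ℓ(n-1)/(2-nℓ)`. -/
theorem thickness_eq (d n : ℕ) (hd : 1 ≤ d) (hn : 2 ≤ n) (ℓ g : ℝ)
    (hℓ : ℓ ∈ Set.Ioo (0 : ℝ) (2 / (n : ℝ))) (hg : g = (2 - (n : ℝ) * ℓ) / ((n : ℝ) - 1))
    (f : (Fin d → Fin n) → (Fin d → ℝ) → (Fin d → ℝ))
    (hf : ∀ k x j, f k x j = (ℓ / 2) * x j + (-1 + ((k j : ℕ) : ℝ) * (ℓ + g) + ℓ / 2))
    (C : Set (Fin d → ℝ)) (hCc : IsCompact C) (hCne : C.Nonempty)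
    (hC : C = ⋃ k, f k '' C) :
    (⨅ I : List (Fin d → Fin n),
        ENNReal.ofReal ((ℓ / 2) ^ (I.length + 1)) /
          ENNReal.ofReal (⨆ x ∈ wordMap f I '' closedBall (0 : Fin d → ℝ) 1, infDist x C))
      = ENNReal.ofReal (ℓ / g) := by
  have hl0 : 0 < ℓ := hℓ.1
  have hnR : (2 : ℝ) ≤ (n : ℝ) := by exact_mod_cast hn
  have hnpos : (0 : ℝ) < (n : ℝ) := by linarith
  have hnl : (n : ℝ) * ℓ < 2 := by
    have h2 := hℓ.2
    rw [lt_div_iff₀ hnpos] at h2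
    linarith [h2]
  have hg0 : 0 < g := by
    rw [hg]; exact div_pos (by linarith) (by linarith)
  have hkey : ((n : ℝ) - 1) * (ℓ + g) = 2 - ℓ := by
    have hne : (n : ℝ) - 1 ≠ 0 := by linarith
    rw [hg, mul_add, mul_div_cancel₀ _ hne]; ring
  have hl1 : ℓ < 1 := thk_ell_lt_one hn hl0 hg0 hkey
  -- link f with thkPhi
  have hthkphi : ∀ (k : Fin d → Fin n) (x : Fin d → ℝ) (j : Fin d),
      f k x j = thkPhi n ℓ g (k j) (x j) := by
    intro k x j; rw [hf]; rfl
  have proj : ∀ (I : List (Fin d → Fin n)) (x : Fin d → ℝ) (j : Fin d),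
      wordMap f I x j = wordMap (thkPhi n ℓ g) (I.map (fun k => k j)) (x j) := by
    intro I
    induction I with
    | nil => intro x j; rfl
    | cons k I ihI =>
      intro x j
      rw [List.map_cons, thk_wordMap_cons, thk_wordMap_cons, Function.comp_apply, Function.comp_apply,
        hthkphi k _ j, ihI x j]
  -- C is contained in the unit cube
  have hCQ : ∀ z ∈ C, ∀ j, |z j| ≤ 1 := by
    obtain ⟨x₀, hx₀C, hmax⟩ := hCc.exists_isMaxOn hCne continuous_norm.continuousOn
    have hx₀le : ‖x₀‖ ≤ 1 := by
      have hx₀U : x₀ ∈ ⋃ k, f k '' C := hC ▸ hx₀C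
      rw [mem_iUnion] at hx₀U
      obtain ⟨k, y, hyC, hfy⟩ := hx₀U
      have hbd : ‖x₀‖ ≤ ℓ / 2 * ‖x₀‖ + (1 - ℓ / 2) := by
        have hy0 : (0:ℝ) ≤ ‖y‖ := norm_nonneg y
        have h1 : ‖x₀‖ ≤ ℓ / 2 * ‖y‖ + (1 - ℓ / 2) := by
          rw [← hfy]
          rw [pi_norm_le_iff_of_nonneg (by nlinarith)]
          intro j
          rw [Real.norm_eq_abs, hthkphi k y j]
          have hc := thk_c_bound hn hl0 hg0 hkey (k j)
          have hyj : |y j| ≤ ‖y‖ := by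
            rw [← Real.norm_eq_abs]; exact norm_le_pi_norm y j
          calc |thkPhi n ℓ g (k j) (y j)|
              ≤ |ℓ / 2 * y j| + |(-1 + ((k j : Fin n) : ℝ) * (ℓ + g) + ℓ / 2)| := abs_add_le _ _
            _ ≤ ℓ / 2 * ‖y‖ + (1 - ℓ / 2) := by
                rw [abs_mul, abs_of_pos (by linarith : (0:ℝ) < ℓ / 2)]
                refine add_le_add (by nlinarith) hc
        have h2 : ‖y‖ ≤ ‖x₀‖ := hmax hyC
        nlinarith
      have hpos : (0:ℝ) < 1 - ℓ / 2 := by linarith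
      have h4 : (1 - ℓ / 2) * ‖x₀‖ ≤ (1 - ℓ / 2) * 1 := by nlinarith
      exact le_of_mul_le_mul_left h4 hpos
    intro z hz j
    have h1 : |z j| ≤ ‖z‖ := by rw [← Real.norm_eq_abs]; exact norm_le_pi_norm z j
    have h2 : ‖z‖ ≤ ‖x₀‖ := hmax hz
    nlinarith
  -- words map C into C
  have hmapsC : ∀ (J : List (Fin d → Fin n)) w, w ∈ C → wordMap f J w ∈ C := by
    intro J
    induction J with
    | nil => intro w hw; exact hw
    | cons k J ihJ =>
      intro w hw
      rw [thk_wordMap_cons, Function.comp_apply]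
      have : f k (wordMap f J w) ∈ ⋃ k, f k '' C :=
        mem_iUnion.2 ⟨k, ⟨wordMap f J w, ihJ w hw, rfl⟩⟩
      rwa [← hC] at this
  -- decomposition of C by words of given length
  have hdecomp : ∀ (m : ℕ) z, z ∈ C → ∃ J w, J.length = m ∧ w ∈ C ∧ z = wordMap f J w := by
    intro m
    induction m with
    | zero => intro z hz; exact ⟨[], z, rfl, hz, rfl⟩
    | succ m ihm =>
      intro z hz
      have hz' : z ∈ ⋃ k, f k '' C := hC ▸ hz
      rw [mem_iUnion] at hz'
      obtain ⟨k, y, hyC, hfy⟩ := hz'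
      obtain ⟨J, w, hJlen, hwC, hyW⟩ := ihm y hyC
      exact ⟨k :: J, w, by simp [hJlen], hwC, by
        rw [thk_wordMap_cons, Function.comp_apply, ← hyW, hfy]⟩
  -- the fundamental upper bound on the unit cube
  have hupper0 : ∀ x : Fin d → ℝ, (∀ j, |x j| ≤ 1) → infDist x C ≤ g / 2 := by
    intro x hx
    refine le_of_forall_pos_le_add ?_
    intro ε hε
    obtain ⟨m, hm⟩ := exists_pow_lt_of_lt_one (show (0:ℝ) < ε / 2 by linarith)
      (show ℓ / 2 < 1 by linarith)
    obtain ⟨K, hKlen, y, hy, hprop⟩ := thk_approx hn hl0 hg0 hkey d m x hx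
    obtain ⟨w, hwC⟩ := hCne
    set z := wordMap f K w with hzdef
    have hzC : z ∈ C := hmapsC K w hwC
    set P := wordMap f K y with hPdef
    have hxP : dist x P ≤ g / 2 := by
      rw [dist_pi_le_iff (by linarith)]
      intro j
      rw [Real.dist_eq, hPdef, proj K y j]
      exact (hprop j).1
    have hPz : dist P z ≤ (ℓ / 2) ^ m * 2 := by
      rw [dist_pi_le_iff (by positivity)]
      intro j
      rw [Real.dist_eq, hPdef, hzdef, proj K y j, proj K w j,
        thk_wphi_affine hn hl0 hg0 hkey _ (y j), thk_wphi_affine hn hl0 hg0 hkey _ (w j)]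
      have hlen2 : (K.map (fun k => k j)).length = m := by simp [hKlen]
      rw [hlen2]
      have h1 : |(ℓ/2) ^ m * y j + wordMap (thkPhi n ℓ g) (K.map fun k => k j) 0 -
          ((ℓ/2) ^ m * w j + wordMap (thkPhi n ℓ g) (K.map fun k => k j) 0)|
          = (ℓ/2) ^ m * |y j - w j| := by
        rw [show (ℓ/2) ^ m * y j + wordMap (thkPhi n ℓ g) (K.map fun k => k j) 0 -
          ((ℓ/2) ^ m * w j + wordMap (thkPhi n ℓ g) (K.map fun k => k j) 0)
          = (ℓ/2) ^ m * (y j - w j) by ring, abs_mul, abs_of_pos (by positivity)]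
      rw [h1]
      have : |y j - w j| ≤ 2 := by
        have := hy j; have := hCQ w hwC j
        have h3 := abs_sub (y j) (w j)
        calc |y j - w j| ≤ |y j| + |w j| := abs_sub _ _
          _ ≤ 2 := by linarith
      nlinarith [pow_pos (show (0:ℝ) < ℓ/2 by linarith) m]
    calc infDist x C ≤ dist x z := infDist_le_dist_of_mem hzC
      _ ≤ dist x P + dist P z := dist_triangle _ _ _
      _ ≤ g / 2 + (ℓ / 2) ^ m * 2 := add_le_add hxP hPz
      _ ≤ g / 2 + ε := by linarith
  -- per-word computation of the sup
  have hI : ∀ I : List (Fin d → Fin n),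
      ENNReal.ofReal ((ℓ / 2) ^ (I.length + 1)) /
        ENNReal.ofReal (⨆ x ∈ wordMap f I '' closedBall (0 : Fin d → ℝ) 1, infDist x C)
        = ENNReal.ofReal (ℓ / g) := by
    intro I
    set m := I.length with hm
    have hval0 : (0:ℝ) ≤ (ℓ / 2) ^ m * (g / 2) := by positivity
    -- upper bound for every point of S_I
    have hupperI : ∀ x ∈ wordMap f I '' closedBall (0 : Fin d → ℝ) 1,
        infDist x C ≤ (ℓ / 2) ^ m * (g / 2) := by
      rintro x ⟨y, hyB, rfl⟩
      have hyabs : ∀ j, |y j| ≤ 1 := by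
        intro j
        rw [mem_closedBall, dist_zero_right] at hyB
        rw [← Real.norm_eq_abs]
        exact (norm_le_pi_norm y j).trans hyB
      obtain ⟨z, hzC, hzd⟩ := hCc.exists_infDist_eq_dist hCne y
      have hdyz : dist y z ≤ g / 2 := hzd ▸ hupper0 y hyabs
      have hWz : wordMap f I z ∈ C := hmapsC I z hzC
      have hdist : dist (wordMap f I y) (wordMap f I z) ≤ (ℓ / 2) ^ m * dist y z := by
        rw [dist_pi_le_iff (by positivity)]
        intro j
        rw [Real.dist_eq, proj I y j, proj I z j, thk_wphi_affine hn hl0 hg0 hkey _ (y j),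
          thk_wphi_affine hn hl0 hg0 hkey _ (z j)]
        have hlen2 : (I.map (fun k => k j)).length = m := by simp [hm]
        rw [hlen2]
        have h1 : |(ℓ/2) ^ m * y j + wordMap (thkPhi n ℓ g) (I.map fun k => k j) 0 -
            ((ℓ/2) ^ m * z j + wordMap (thkPhi n ℓ g) (I.map fun k => k j) 0)|
            = (ℓ/2) ^ m * |y j - z j| := by
          rw [show (ℓ/2) ^ m * y j + wordMap (thkPhi n ℓ g) (I.map fun k => k j) 0 -
            ((ℓ/2) ^ m * z j + wordMap (thkPhi n ℓ g) (I.map fun k => k j) 0)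
            = (ℓ/2) ^ m * (y j - z j) by ring, abs_mul, abs_of_pos (by positivity)]
        rw [h1]
        have : |y j - z j| ≤ dist y z := by
          rw [← Real.dist_eq]; exact dist_le_pi_dist y z j
        nlinarith [pow_pos (show (0:ℝ) < ℓ/2 by linarith) m]
      calc infDist (wordMap f I y) C ≤ dist (wordMap f I y) (wordMap f I z) :=
            infDist_le_dist_of_mem hWz
        _ ≤ (ℓ / 2) ^ m * dist y z := hdist
        _ ≤ (ℓ / 2) ^ m * (g / 2) := by
            apply mul_le_mul_of_nonneg_left hdyz (by positivity)
    -- witness point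
    have hs0 : |(-1 + ℓ + g / 2 : ℝ)| ≤ 1 := thk_s0_abs hn hl0 hg0 hkey
    set p : Fin d → ℝ := fun _ => -1 + ℓ + g / 2 with hpdef
    have hpB : p ∈ closedBall (0 : Fin d → ℝ) 1 := by
      rw [mem_closedBall, dist_zero_right, pi_norm_le_iff_of_nonneg (by norm_num)]
      intro j; rw [Real.norm_eq_abs]; exact hs0
    set xs := wordMap f I p with hxsdef
    have hxsS : xs ∈ wordMap f I '' closedBall (0 : Fin d → ℝ) 1 := ⟨p, hpB, rfl⟩
    have hlow : (ℓ / 2) ^ m * (g / 2) ≤ infDist xs C := by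
      obtain ⟨z, hzC, hzd⟩ := hCc.exists_infDist_eq_dist hCne xs
      rw [hzd]
      obtain ⟨J', w, hJ'len, hwC, rfl⟩ := hdecomp (m + 1) z hzC
      have j₀ : Fin d := ⟨0, hd⟩
      have h1 : |xs j₀ - wordMap f J' w j₀| ≤ dist xs (wordMap f J' w) := by
        rw [← Real.dist_eq]; exact dist_le_pi_dist _ _ j₀
      have h2 : (ℓ / 2) ^ m * (g / 2) ≤ |xs j₀ - wordMap f J' w j₀| := by
        rw [hxsdef, proj I p j₀, proj J' w j₀]
        have hlenI : (I.map (fun k => k j₀)).length = m := by simp [hm]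
        have hlenJ : (J'.map (fun k => k j₀)).length = (I.map (fun k => k j₀)).length + 1 := by
          simp [hJ'len, hlenI]
        have := thk_lower_key hn hl0 hg0 hkey (I.map (fun k => k j₀)) (J'.map (fun k => k j₀))
          hlenJ (hCQ w hwC j₀)
        rw [hlenI] at this
        exact this
      exact h2.trans h1
    have hsup : (⨆ x ∈ wordMap f I '' closedBall (0 : Fin d → ℝ) 1, infDist x C)
        = (ℓ / 2) ^ m * (g / 2) := by
      apply le_antisymm
      · apply Real.iSup_le _ hval0
        intro x
        exact Real.iSup_le (fun hx => hupperI x hx) hval0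
      · have hb : BddAbove (Set.range fun x => ⨆ _ : x ∈ wordMap f I '' closedBall (0 : Fin d → ℝ) 1,
            infDist x C) := by
          refine ⟨(ℓ / 2) ^ m * (g / 2), ?_⟩
          rintro v ⟨x, rfl⟩
          exact Real.iSup_le (fun hx => hupperI x hx) hval0
        refine le_ciSup_of_le hb xs ?_
        have hb2 : BddAbove (Set.range fun _ : xs ∈ wordMap f I '' closedBall (0 : Fin d → ℝ) 1 =>
            infDist xs C) := by
          refine ⟨infDist xs C, ?_⟩
          rintro v ⟨hx, rfl⟩
          exact le_refl _
        exact hlow.trans (le_ciSup hb2 hxsS)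
    rw [hsup, ← ENNReal.ofReal_div_of_pos (by positivity)]
    congr 1
    have h1 : ((ℓ:ℝ) / 2) ^ m ≠ 0 := by positivity
    have h2 : g ≠ 0 := ne_of_gt hg0
    rw [pow_succ]
    field_simp
  calc (⨅ I : List (Fin d → Fin n),
        ENNReal.ofReal ((ℓ / 2) ^ (I.length + 1)) /
          ENNReal.ofReal (⨆ x ∈ wordMap f I '' closedBall (0 : Fin d → ℝ) 1, infDist x C))
      = ⨅ _ : List (Fin d → Fin n), ENNReal.ofReal (ℓ / g) := iInf_congr hI
    _ = ENNReal.ofReal (ℓ / g) := iInf_const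
end

section
/- The natural system of balls for C_{ℓ,n} is r-uniformly dense with r = ℓ + (2 − nℓ)/(2(n − 1)) = ℓ + g/2; that is, for every word I and every closed ℓ^∞-ball B ⊆ S_I with rad(B) ≥ r · rad(S_I), there is a child S_{I,k} ⊆ B. -/
open Metric Set
open scoped ENNReal

lemma foldl_comp_eq {E K : Type*} (f : K → E → E) :
    ∀ (l : List K) (g : E → E), (l.map f).foldl (· ∘ ·) g = g ∘ wordMap f l
  | [], g => rfl
  | a :: l, g => by
      have h : wordMap f (a :: l) = (id ∘ f a) ∘ wordMap f l := by
        rw [wordMap, List.map_cons, List.foldl_cons, foldl_comp_eq f l (id ∘ f a)]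
      simp only [List.map_cons, List.foldl_cons]
      rw [foldl_comp_eq f l (g ∘ f a), h]
      rfl

lemma wordMap_cons {E K : Type*} (f : K → E → E) (a : K) (l : List K) :
    wordMap f (a :: l) = f a ∘ wordMap f l := by
  rw [wordMap, List.map_cons, List.foldl_cons, foldl_comp_eq f l (id ∘ f a)]
  rfl

lemma wordMap_append {E K : Type*} (f : K → E → E) (l : List K) (k : K) :
    wordMap f (l ++ [k]) = wordMap f l ∘ f k := by
  rw [wordMap, List.map_append, List.foldl_append]
  rfl


set_option maxHeartbeats 1000000 in
/-- The natural system of balls of `C_{ℓ,n}` is `r`-uniformly dense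
for `r = ℓ + g/2`: every closed `ℓ^∞`-ball contained in `S_I` with radius at least
`(ℓ + g/2)·rad(S_I)` (where `rad(S_I) = (ℓ/2)^{|I|}`) contains a child `S_{I,k}`. -/
theorem uniformly_dense (d n : ℕ) (hd : 1 ≤ d) (hn : 2 ≤ n) (ℓ g : ℝ)
    (hℓ : ℓ ∈ Set.Ioo (0 : ℝ) (2 / (n : ℝ))) (hg : g = (2 - (n : ℝ) * ℓ) / ((n : ℝ) - 1))
    (f : (Fin d → Fin n) → (Fin d → ℝ) → (Fin d → ℝ))
    (hf : ∀ k x j, f k x j = (ℓ / 2) * x j + (-1 + ((k j : ℕ) : ℝ) * (ℓ + g) + ℓ / 2))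
    (C : Set (Fin d → ℝ)) (hCc : IsCompact C) (hCne : C.Nonempty)
    (hC : C = ⋃ k, f k '' C)
    (I : List (Fin d → Fin n)) (x : Fin d → ℝ) (ρ : ℝ)
    (hsub : closedBall x ρ ⊆ wordMap f I '' closedBall (0 : Fin d → ℝ) 1)
    (hρ : (ℓ + g / 2) * (ℓ / 2) ^ I.length ≤ ρ) :
    ∃ k : Fin d → Fin n,
      wordMap f (I ++ [k]) '' closedBall (0 : Fin d → ℝ) 1 ⊆ closedBall x ρ := by
  have hℓ0 : 0 < ℓ := hℓ.1
  have hn2 : (2 : ℝ) ≤ (n : ℝ) := by exact_mod_cast hn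
  have hn0 : (0 : ℝ) < n := by linarith
  have hnℓ : (n : ℝ) * ℓ < 2 := by
    have := hℓ.2
    rw [lt_div_iff₀ hn0] at this
    linarith [this]
  have hn1 : (0 : ℝ) < (n : ℝ) - 1 := by linarith
  have hg0 : 0 < g := by rw [hg]; exact div_pos (by linarith) hn1
  have hℓg : 0 < ℓ + g := by linarith
  have hsum : ((n : ℝ) - 1) * (ℓ + g) = 2 - ℓ := by
    rw [hg]; field_simp; ring
  set s : ℝ := (ℓ / 2) ^ I.length with hs_def
  have hs : 0 < s := pow_pos (by linarith) _
  have hρ0 : 0 < ρ := lt_of_lt_of_le (by positivity) hρ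
  set c : Fin d → ℝ := wordMap f I 0 with hc_def
  -- affine formula
  have key : ∀ (L : List (Fin d → Fin n)) (y : Fin d → ℝ) (j : Fin d),
      wordMap f L y j = (ℓ / 2) ^ L.length * y j + wordMap f L 0 j := by
    intro L
    induction L with
    | nil => intro y j; simp [wordMap]
    | cons a L ih =>
      intro y j
      have hc : ∀ z : Fin d → ℝ, wordMap f (a :: L) z = f a (wordMap f L z) :=
        fun z => congrFun (wordMap_cons f a L) z
      rw [hc, hc, hf, hf, ih y j, ih 0 j, List.length_cons]
      simp only [Pi.zero_apply]
      ring
  -- Step A : coordinate bounds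
  have hA : ∀ j, x j - c j ≤ s - ρ ∧ -(s - ρ) ≤ x j - c j := by
    intro j
    have hpt : ∀ e : ℝ, |e| ≤ ρ → ∃ y : ℝ, |y| ≤ 1 ∧ x j + e = s * y + c j := by
      intro e he
      have hmem : Function.update x j (x j + e) ∈ closedBall x ρ := by
        rw [mem_closedBall]
        refine (dist_pi_le_iff hρ0.le).2 fun i => ?_
        by_cases h : i = j
        · subst h
          rw [Function.update_self, Real.dist_eq]
          simpa using he
        · rw [Function.update_of_ne h]
          simpa using hρ0.le
      obtain ⟨y, hy, hxy⟩ := hsub hmem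
      refine ⟨y j, ?_, ?_⟩
      · have h1 := (dist_pi_le_iff zero_le_one).1 (mem_closedBall.1 hy) j
        simpa [Real.dist_eq] using h1
      · have h2 := congrFun hxy j
        rw [key I y j, Function.update_self] at h2
        rw [← hc_def, ← hs_def] at h2
        linarith [h2]
    obtain ⟨y1, hy1, he1⟩ := hpt ρ (by rw [abs_of_nonneg hρ0.le])
    obtain ⟨y2, hy2, he2⟩ := hpt (-ρ) (by rw [abs_neg, abs_of_nonneg hρ0.le])
    have h1 := abs_le.1 hy1
    have h2 := abs_le.1 hy2
    constructor
    · nlinarith [h2.1, hs]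
    · nlinarith [h1.2, hs]
  -- bounds on (x j - c j)/s
  have hub : ∀ j, x j - c j ≤ s * (1 - ℓ - g / 2) := by
    intro j; nlinarith [(hA j).1, hρ]
  have hlb : ∀ j, -(s * (1 - ℓ - g / 2)) ≤ x j - c j := by
    intro j; nlinarith [(hA j).2, hρ]
  set T : Fin d → ℝ := fun j => ((x j - c j) / s + 1 - ℓ / 2) / (ℓ + g) with hT_def
  have hTub : ∀ j, T j + 1 / 2 ≤ (n : ℝ) - 1 := by
    intro j
    have hdiv : (x j - c j) / s ≤ 1 - ℓ - g / 2 := (div_le_iff₀ hs).2 (by nlinarith [hub j])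
    have : T j ≤ (n : ℝ) - 1 - 1 / 2 := by
      rw [hT_def]
      rw [div_le_iff₀ hℓg]
      nlinarith [hsum, hdiv]
    linarith
  have hTlb : ∀ j, 0 ≤ T j + 1 / 2 := by
    intro j
    have hdiv : -(1 - ℓ - g / 2) ≤ (x j - c j) / s := (le_div_iff₀ hs).2 (by nlinarith [hlb j])
    have : 0 ≤ T j := by
      rw [hT_def]
      apply div_nonneg _ hℓg.le
      linarith
    linarith
  -- define k
  have hklt : ∀ j, ⌊T j + 1 / 2⌋₊ < n := by
    intro j
    rw [Nat.floor_lt (hTlb j)]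
    linarith [hTub j]
  set k : Fin d → Fin n := fun j => ⟨⌊T j + 1 / 2⌋₊, hklt j⟩ with hk_def
  have hkT : ∀ j, |T j - ((k j : ℕ) : ℝ)| ≤ 1 / 2 := by
    intro j
    have h1 : ((⌊T j + 1 / 2⌋₊ : ℕ) : ℝ) ≤ T j + 1 / 2 := Nat.floor_le (hTlb j)
    have h2 : T j + 1 / 2 < (⌊T j + 1 / 2⌋₊ : ℕ) + 1 := Nat.lt_floor_add_one _
    rw [abs_le]
    constructor <;> simp only [hk_def] <;> [linarith; linarith]
  -- child center
  set c' : Fin d → ℝ := wordMap f (I ++ [k]) 0 with hc'_def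
  have hc' : ∀ j, c' j = s * (-1 + ((k j : ℕ) : ℝ) * (ℓ + g) + ℓ / 2) + c j := by
    intro j
    have h0 : wordMap f (I ++ [k]) (0 : Fin d → ℝ) = wordMap f I (f k 0) :=
      congrFun (wordMap_append f I k) 0
    rw [hc'_def, h0, key I (f k 0) j, hf]
    simp only [Pi.zero_apply, mul_zero, zero_add]
    try rw [← hc_def]
    try rw [← hs_def]
    try ring
  have hx_eq : ∀ j, x j - c j = s * (T j * (ℓ + g) - 1 + ℓ / 2) := by
    intro j
    have hTe : T j * (ℓ + g) = (x j - c j) / s + 1 - ℓ / 2 := div_mul_cancel₀ _ hℓg.ne'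
    rw [hTe]
    field_simp
    try ring
  have hcenter : ∀ j, |c' j - x j| ≤ ρ - s * (ℓ / 2) := by
    intro j
    have he : c' j - x j = s * (ℓ + g) * (((k j : ℕ) : ℝ) - T j) := by
      rw [hc' j]
      linear_combination -hx_eq j
    have h2 : |c' j - x j| ≤ s * (ℓ + g) * (1 / 2) := by
      rw [he, abs_mul, abs_of_nonneg (mul_pos hs hℓg).le]
      have hb : |((k j : ℕ) : ℝ) - T j| ≤ 1 / 2 := by rw [abs_sub_comm]; exact hkT j
      exact mul_le_mul_of_nonneg_left hb (mul_pos hs hℓg).le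
    linarith [h2, hρ]
  -- conclusion
  refine ⟨k, ?_⟩
  rintro z ⟨y, hy, rfl⟩
  rw [mem_closedBall]
  refine (dist_pi_le_iff hρ0.le).2 fun j => ?_
  have hyj : |y j| ≤ 1 := by
    have h1 := (dist_pi_le_iff zero_le_one).1 (mem_closedBall.1 hy) j
    simpa [Real.dist_eq] using h1
  have hlen : (I ++ [k]).length = I.length + 1 := by simp
  have hz : wordMap f (I ++ [k]) y j = s * (ℓ / 2) * y j + c' j := by
    rw [key (I ++ [k]) y j, hlen, pow_succ, ← hs_def, ← hc'_def]
  rw [Real.dist_eq, hz]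
  have h1 := hcenter j
  rw [abs_le] at h1 ⊢
  have hy1 := abs_le.1 hyj
  have ha : (0 : ℝ) ≤ s * (ℓ / 2) := by positivity
  have hb1 : s * (ℓ / 2) * y j ≤ s * (ℓ / 2) * 1 := mul_le_mul_of_nonneg_left hy1.2 ha
  have hb2 : s * (ℓ / 2) * (-1) ≤ s * (ℓ / 2) * y j := mul_le_mul_of_nonneg_left hy1.1 ha
  constructor <;> linarith [h1.1, h1.2, hb1, hb2]
end

section
/- Let C be a self-homothetic attractor as in the context, and let h_∅ := max_{x ∈ B[0,1]} dist(x, C). Then h_∅ ≤ sup_{x ∈ B[0,1] ∖ ⋃_i f_i(B[0,1])} min_i (‖x − t_i‖ − λ_i)/(1 − λ_i), with the convention that the supremum over the empty set is 0. -/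
/-!
Let `x₀` be a point of the unit ball `B` farthest from `C`, at distance `h`. For each `i`, take
the point `f_i(y)`, `y ∈ B`, of `f_i(B)` nearest to `x₀`. Since `f_i(C) ⊆ C`, the homothety gives
`dist(f_i y, C) ≤ λ_i dist(y, C) ≤ λ_i h`, hence `h ≤ max(‖x₀ - t_i‖ - λ_i, 0) + λ_i h`. If `x₀`
lies in some `f_i(B)` this forces `h = 0`; otherwise `x₀` is admissible in the supremum and
`h ≤ min_i (‖x₀ - t_i‖ - λ_i) / (1 - λ_i)`.
-/

open Metric Set
open scoped ENNReal

open scoped Pointwise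

section Homothety

variable {𝕜 E : Type*} [NormedField 𝕜] [SeminormedAddCommGroup E] [NormedSpace 𝕜 E]

theorem infDist_smul_add_le {C : Set E} (hC : C.Nonempty) {a : 𝕜} {t : E}
    (hmaps : (fun x => a • x + t) '' C ⊆ C) (y : E) :
    infDist (a • y + t) C ≤ ‖a‖ * infDist y C := by
  rcases eq_or_ne a 0 with rfl | ha
  · obtain ⟨c, hc⟩ := hC
    have ht : t ∈ C := by simpa using hmaps (mem_image_of_mem _ hc)
    simp [infDist_zero_of_mem ht]
  · calc infDist (a • y + t) C
        ≤ infDist (a • y + t) ((fun x => a • x + t) '' C) :=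
          infDist_le_infDist_of_subset hmaps (hC.image _)
      _ = infDist (a • y) (a • C) := by
          rw [← image_smul, ← image_image (· + t) (a • ·), infDist_image (isometry_add_right t)]
      _ = ‖a‖ * infDist y C := infDist_smul₀ ha C y

end Homothety

section UnitBall

variable {E : Type*} [SeminormedAddCommGroup E] [NormedSpace ℝ E]

theorem exists_mem_closedBall_dist_smul_add_eq (x c : E) {ρ : ℝ} (hρ : 0 < ρ) :
    ∃ y ∈ closedBall (0 : E) 1, dist x (ρ • y + c) = max (‖x - c‖ - ρ) 0 := by
  rcases le_or_gt ‖x - c‖ ρ with hin | hout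
  · refine ⟨ρ⁻¹ • (x - c), ?_, ?_⟩
    · rw [mem_closedBall_zero_iff, norm_smul, Real.norm_of_nonneg (inv_nonneg.2 hρ.le),
        inv_mul_le_iff₀ hρ, mul_one]
      exact hin
    · rw [smul_inv_smul₀ hρ.ne', sub_add_cancel, dist_self, max_eq_right (by linarith)]
  · have hr : 0 < ‖x - c‖ := hρ.trans hout
    refine ⟨‖x - c‖⁻¹ • (x - c), ?_, ?_⟩
    · rw [mem_closedBall_zero_iff, norm_smul, norm_inv, norm_norm, inv_mul_cancel₀ hr.ne']
    · have hx : x - (ρ • ‖x - c‖⁻¹ • (x - c) + c) = (1 - ρ / ‖x - c‖) • (x - c) := by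
        rw [smul_smul, sub_smul, one_smul, div_eq_mul_inv]
        abel
      rw [dist_eq_norm, hx, norm_smul, Real.norm_of_nonneg, max_eq_left (by linarith)]
      · field_simp
      · rw [sub_nonneg, div_le_one hr]
        exact hout.le

theorem one_sub_mul_infDist_le_of_isMaxOn {C : Set E} (hC : C.Nonempty) {x₀ : E}
    (hmax : IsMaxOn (infDist · C) (closedBall 0 1) x₀) {a : ℝ} (ha : 0 < a) {t : E}
    (hmaps : (fun x => a • x + t) '' C ⊆ C) :
    (1 - a) * infDist x₀ C ≤ max (‖x₀ - t‖ - a) 0 := by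
  obtain ⟨y, hy, hdist⟩ := exists_mem_closedBall_dist_smul_add_eq x₀ t ha
  have hcopy : infDist (a • y + t) C ≤ a * infDist x₀ C :=
    calc infDist (a • y + t) C ≤ ‖a‖ * infDist y C := infDist_smul_add_le hC hmaps y
      _ ≤ a * infDist x₀ C := by
          rw [Real.norm_of_nonneg ha.le]
          exact mul_le_mul_of_nonneg_left (hmax hy) ha.le
  have := infDist_le_infDist_add_dist (s := C) (x := x₀) (y := a • y + t)
  linarith

end UnitBall

section GapFunction

variable {E : Type*} [SeminormedAddCommGroup E]

theorem le_biSup_iInf_of_forall_one_sub_mul_le {ι : Type*} [Finite ι] [Nonempty ι]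
    [ProperSpace E] {lam : ι → ℝ} (hlam : ∀ i, lam i < 1) {t : ι → E} {x₀ : E}
    (hx₀ : x₀ ∈ closedBall 0 1) {h : ℝ}
    (hstep : ∀ i, (1 - lam i) * h ≤ max (‖x₀ - t i‖ - lam i) 0) :
    h ≤ ⨆ x ∈ closedBall (0 : E) 1 \ ⋃ i, closedBall (t i) (lam i),
      ⨅ i, (‖x - t i‖ - lam i) / (1 - lam i) := by
  set F : E → ℝ := fun x => ⨅ i, (‖x - t i‖ - lam i) / (1 - lam i)
  have hlt {x i} (hx : x ∉ ⋃ i, closedBall (t i) (lam i)) : lam i < ‖x - t i‖ := by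
    simpa [dist_eq_norm] using fun hi => hx (mem_iUnion_of_mem i hi)
  by_cases hx₀D : x₀ ∈ ⋃ i, closedBall (t i) (lam i)
  · obtain ⟨i, hi⟩ := mem_iUnion.1 hx₀D
    have h0 : (1 - lam i) * h ≤ 0 := by
      simpa [max_eq_right (sub_nonpos.2 (mem_closedBall_iff_norm.1 hi))] using hstep i
    refine (nonpos_of_mul_nonpos_right h0 (sub_pos.2 (hlam i))).trans ?_
    exact Real.iSup_nonneg fun x => Real.iSup_nonneg fun hx => Real.iInf_nonneg fun i =>
      div_nonneg (sub_nonneg.2 (hlt hx.2).le) (sub_pos.2 (hlam i)).le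
  · have hF_usc : UpperSemicontinuous F :=
      upperSemicontinuous_ciInf (fun x => (finite_range _).bddBelow) fun i =>
        (by fun_prop : Continuous fun x => (‖x - t i‖ - lam i) / (1 - lam i)).upperSemicontinuous
    have hF_bdd : BddAbove (F '' closedBall 0 1) :=
      (hF_usc.upperSemicontinuousOn _).bddAbove_of_isCompact (isCompact_closedBall 0 1)
    calc h ≤ F x₀ := le_ciInf fun i => by
          rw [le_div_iff₀ (sub_pos.2 (hlam i))]
          linarith [max_eq_left (sub_nonneg.2 (hlt hx₀D (i := i)).le) ▸ hstep i]
      _ ≤ _ := le_ciSup₂ (f := fun x (_ : x ∈ closedBall 0 1 \ ⋃ i, closedBall (t i) (lam i)) => F x)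
          (hF_bdd.mono (iUnion_subset fun x => range_subset_iff.2 fun hx =>
            mem_image_of_mem F hx.1)) x₀ ⟨hx₀, hx₀D⟩

end GapFunction

theorem h_root_le_general {E : Type*} [NormedAddCommGroup E] [NormedSpace ℝ E]
    [FiniteDimensional ℝ E]
    (m : ℕ) (hm : 0 < m) (lam : Fin m → ℝ) (t : Fin m → E)
    (hlam : ∀ i, lam i ∈ Set.Ioo (0 : ℝ) 1)
    (C : Set E) (hCne : C.Nonempty)
    (hC : C = ⋃ i, (fun x => lam i • x + t i) '' C) :
    (⨆ x ∈ closedBall (0 : E) 1, infDist x C)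
      ≤ ⨆ x ∈ (closedBall (0 : E) 1 \ ⋃ i, closedBall (t i) (lam i)),
          ⨅ i, (‖x - t i‖ - lam i) / (1 - lam i) := by
  have : Nonempty (Fin m) := ⟨⟨0, hm⟩⟩
  obtain ⟨x₀, hx₀, hmax⟩ := (isCompact_closedBall (0 : E) 1).exists_isMaxOn
    (nonempty_closedBall.2 zero_le_one) (continuous_infDist_pt C).continuousOn
  calc (⨆ x ∈ closedBall (0 : E) 1, infDist x C) ≤ infDist x₀ C :=
        Real.iSup_le (fun x => Real.iSup_le (fun hx => hmax hx) infDist_nonneg) infDist_nonneg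
    _ ≤ _ := le_biSup_iInf_of_forall_one_sub_mul_le (fun i => (hlam i).2) hx₀ fun i =>
        one_sub_mul_infDist_le_of_isMaxOn hCne hmax (hlam i).1
          ((subset_iUnion _ i).trans hC.superset)

/-- Let `C` be the attractor of an IFS of homotheties
`f_i(x) = λ_i x + t_i` with `λ_i ∈ (0,1)` and `f_i(B[0,1]) = B[t_i, λ_i] ⊆ B[0,1]`.
Then `h_∅ := max_{x ∈ B[0,1]} dist(x,C)` satisfies
`h_∅ ≤ sup_{x ∈ B[0,1] \ ⋃_i f_i(B[0,1])} min_i (‖x - t_i‖ - λ_i)/(1 - λ_i)`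
(with the Lean conventions giving the supremum over the empty set the value 0). -/
theorem h_root_le {E : Type*} [NormedAddCommGroup E] [NormedSpace ℝ E]
    [FiniteDimensional ℝ E]
    (m : ℕ) (hm : 0 < m) (lam : Fin m → ℝ) (t : Fin m → E)
    (hlam : ∀ i, lam i ∈ Set.Ioo (0 : ℝ) 1)
    (hsub : ∀ i, closedBall (t i) (lam i) ⊆ closedBall (0 : E) 1)
    (C : Set E) (hCc : IsCompact C) (hCne : C.Nonempty)
    (hC : C = ⋃ i, (fun x => lam i • x + t i) '' C) :
    (⨆ x ∈ closedBall (0 : E) 1, infDist x C)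
      ≤ ⨆ x ∈ (closedBall (0 : E) 1 \ ⋃ i, closedBall (t i) (lam i)),
          ⨅ i, (‖x - t i‖ - lam i) / (1 - lam i) :=
  h_root_le_general m hm lam t hlam C hCne hC
end

section
/- Let C be a self-homothetic attractor as in the context, with system of balls S_I := f_{i₁} ∘ ⋯ ∘ f_{i_k}(B[0,1]). Then {S_I} is (2·max_i λ_i + h_∅)-uniformly dense, where h_∅ := max_{x ∈ B[0,1]} dist(x, C): for every word I and every closed ball B ⊆ S_I with rad(B) ≥ (2·max_i λ_i + h_∅) · rad(S_I), there is a child S_{I,i} ⊆ B. -/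
open Metric Set
open scoped ENNReal

/-!
Pull the ball `B = B[x, ρ] ⊆ S_I` back along the homothety `S_∅ → S_I`: its centre becomes a
point `x' ∈ B[0,1]`. Some point `c` of the attractor lies within `h_∅` of `x'`, and `c` lies in
one of the pieces `f_i(C) ⊆ f_i(B[0,1])`, a set of diameter at most `2 λ_i`. So `f_i(B[0,1])` lies
in `B[x', 2 λ_i + h_∅]`, and pushing forward by the ratio `λ_I` gives `S_{I,i} ⊆ B`. That the
attractor lies in `B[0,1]` at all comes from a maximum argument: at a point of `C` farthest from
`B[0,1]`, the contraction `f_i` it comes from shrinks that distance by the factor `λ_i < 1`.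
-/

open scoped NNReal

theorem wordMap_append_singleton {β κ : Type*} (g : κ → β → β) (I : List κ) (i : κ) :
    wordMap g (I ++ [i]) = wordMap g I ∘ g i := by
  simp [wordMap, List.foldl_append]

section MetricSpace

variable {α ι : Type*} [PseudoMetricSpace α] {f : ι → α → α} {K : ι → ℝ≥0}

theorem lipschitzWith_wordMap (hf : ∀ i, LipschitzWith (K i) (f i)) (I : List ι) :
    LipschitzWith (I.map K).prod (wordMap f I) := by
  induction I using List.reverseRecOn with
  | nil => exact LipschitzWith.id
  | append_singleton I i ih =>
    rw [wordMap_append_singleton, List.map_append, List.prod_append]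
    simpa using ih.comp (hf i)

theorem LipschitzWith.infDist_image_le {g : α → α} {k : ℝ≥0} (hg : LipschitzWith k g)
    {s : Set α} (hs : s.Nonempty) (x : α) : infDist (g x) (g '' s) ≤ k * infDist x s := by
  have := hs.to_subtype
  rw [infDist_eq_iInf (x := x), Real.mul_iInf_of_nonneg k.coe_nonneg]
  exact le_ciInf fun y =>
    (infDist_le_dist_of_mem (mem_image_of_mem g y.2)).trans (hg.dist_le_mul x y)

theorem IsCompact.subset_of_subset_iUnion_image (hf : ∀ i, LipschitzWith (K i) (f i))
    (hK : ∀ i, K i < 1) {C S : Set α} (hCc : IsCompact C) (hC : C ⊆ ⋃ i, f i '' C)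
    (hS : IsClosed S) (hSne : S.Nonempty) (hfS : ∀ i, MapsTo (f i) S S) : C ⊆ S := by
  rcases C.eq_empty_or_nonempty with rfl | hCne
  · exact empty_subset S
  obtain ⟨y, hyC, hymax⟩ := hCc.exists_isMaxOn hCne (continuous_infDist_pt S).continuousOn
  obtain ⟨i, z, hzC, rfl⟩ : ∃ i, ∃ z ∈ C, f i z = y := by simpa using hC hyC
  have hcontract : infDist (f i z) S ≤ K i * infDist (f i z) S :=
    calc infDist (f i z) S ≤ infDist (f i z) (f i '' S) :=
          infDist_le_infDist_of_subset (hfS i).image_subset (hSne.image _)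
      _ ≤ K i * infDist z S := (hf i).infDist_image_le hSne z
      _ ≤ K i * infDist (f i z) S := by gcongr; exact hymax hzC
  have hmax : infDist (f i z) S = 0 := by
    have : (K i : ℝ) < 1 := hK i
    nlinarith [infDist_nonneg (x := f i z) (s := S)]
  intro c hc
  exact (hS.mem_iff_infDist_zero hSne).2 (le_antisymm (hmax ▸ hymax hc) infDist_nonneg)

theorem IsCompact.exists_image_subset_closedBall (hf : ∀ i, LipschitzWith (K i) (f i))
    {C S : Set α} (hCc : IsCompact C) (hCne : C.Nonempty) (hC : C ⊆ ⋃ i, f i '' C) (hCS : C ⊆ S)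
    (hS : Bornology.IsBounded S) (y : α) :
    ∃ i, f i '' S ⊆ closedBall y (K i * diam S + infDist y C) := by
  obtain ⟨c, hcC, hyc⟩ := hCc.exists_infDist_eq_dist hCne y
  obtain ⟨i, z, hzC, rfl⟩ : ∃ i, ∃ z ∈ C, f i z = c := by simpa using hC hcC
  refine ⟨i, ?_⟩
  rintro _ ⟨u, huS, rfl⟩
  rw [mem_closedBall, hyc]
  calc dist (f i u) y ≤ dist (f i u) (f i z) + dist (f i z) y := dist_triangle _ _ _
    _ ≤ K i * dist u z + dist y (f i z) := by rw [dist_comm y]; gcongr; exact (hf i).dist_le_mul u z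
    _ ≤ K i * diam S + dist y (f i z) := by gcongr; exact dist_le_diam_of_mem hS huS (hCS hzC)

theorem infDist_le_biSup_infDist {s C : Set α} (hs : Bornology.IsBounded s) {y : α} (hy : y ∈ s) :
    infDist y C ≤ ⨆ z ∈ s, infDist z C := by
  refine le_ciSup₂ (f := fun z (_ : z ∈ s) => infDist z C) ⟨infDist y C + diam s, ?_⟩ y hy
  simp only [mem_upperBounds, mem_iUnion, mem_range]
  rintro _ ⟨z, hz, rfl⟩
  exact infDist_le_infDist_add_dist.trans (by gcongr; exact dist_le_diam_of_mem hs hz hy)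

end MetricSpace

section Homothety

variable {E ι : Type*} [NormedAddCommGroup E] [NormedSpace ℝ E] {lam : ι → ℝ} {t : ι → E}

theorem lipschitzWith_smul_add_const (c : ℝ) (t : E) : LipschitzWith ‖c‖₊ fun x : E => c • x + t :=
  LipschitzWith.of_dist_le_mul fun x y => by rw [dist_add_right, dist_smul₀]; rfl

theorem image_wordMap_smul_add_closedBall_subset (hlam : ∀ i, 0 ≤ lam i) (I : List ι) (y : E)
    (r : ℝ) :
    wordMap (fun i x => lam i • x + t i) I '' closedBall y r
      ⊆ closedBall (wordMap (fun i x => lam i • x + t i) I y) ((I.map lam).prod * r) := by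
  have hprod : (((I.map fun i => ‖lam i‖₊).prod : ℝ≥0) : ℝ) = (I.map lam).prod := by
    simp [NNReal.coe_list_prod, Function.comp_def, abs_of_nonneg (hlam _)]
  rw [← hprod]
  exact ((lipschitzWith_wordMap fun i => lipschitzWith_smul_add_const (lam i) (t i)) I
    |>.mapsTo_closedBall y r).image_subset

theorem subset_closedBall_of_subset_iUnion_smul_add (hlam : ∀ i, lam i ∈ Ico 0 1)
    (hsub : ∀ i, closedBall (t i) (lam i) ⊆ closedBall 0 1) {C : Set E} (hCc : IsCompact C)
    (hC : C ⊆ ⋃ i, (fun x => lam i • x + t i) '' C) : C ⊆ closedBall 0 1 := by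
  have hnorm (i : ι) : ‖lam i‖ = lam i := Real.norm_of_nonneg (hlam i).1
  have hf (i : ι) := lipschitzWith_smul_add_const (lam i) (t i)
  refine hCc.subset_of_subset_iUnion_image hf
    (fun i => by simpa [← NNReal.coe_lt_coe, hnorm] using (hlam i).2) hC isClosed_closedBall
    (nonempty_closedBall.2 zero_le_one) fun i => ?_
  refine ((hf i).mapsTo_closedBall 0 1).mono_right (subset_trans ?_ (hsub i))
  simp [hnorm]

end Homothety

theorem uniformly_dense_ifs_general {E : Type*} [NormedAddCommGroup E] [NormedSpace ℝ E]
    (m : ℕ) (lam : Fin m → ℝ) (t : Fin m → E)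
    (hlam : ∀ i, lam i ∈ Set.Ioo (0 : ℝ) 1)
    (hsub : ∀ i, closedBall (t i) (lam i) ⊆ closedBall (0 : E) 1)
    (C : Set E) (hCc : IsCompact C) (hCne : C.Nonempty)
    (hC : C = ⋃ i, (fun x => lam i • x + t i) '' C)
    (I : List (Fin m)) (x : E) (ρ : ℝ)
    (hball : closedBall x ρ ⊆ wordMap (fun i x => lam i • x + t i) I '' closedBall (0 : E) 1)
    (hρ : (2 * (⨆ i, lam i) + (⨆ y ∈ closedBall (0 : E) 1, infDist y C)) * (I.map lam).prod
      ≤ ρ) :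
    ∃ i : Fin m,
      wordMap (fun i x => lam i • x + t i) (I ++ [i]) '' closedBall (0 : E) 1
        ⊆ closedBall x ρ := by
  set f : Fin m → E → E := fun i x => lam i • x + t i
  have hCB : C ⊆ closedBall 0 1 := subset_closedBall_of_subset_iUnion_smul_add
    (fun i => Ioo_subset_Ico_self (hlam i)) hsub hCc hC.le
  have hlam_sup : 0 ≤ ⨆ i, lam i := Real.iSup_nonneg fun i => (hlam i).1.le
  have hh_nonneg : 0 ≤ ⨆ y ∈ closedBall (0 : E) 1, infDist y C :=
    Real.iSup_nonneg fun y => Real.iSup_nonneg fun _ => infDist_nonneg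
  have hP : 0 ≤ (I.map lam).prod := List.prod_nonneg (by simpa using fun i _ => (hlam i).1.le)
  obtain ⟨x', hx'B, rfl⟩ := hball (mem_closedBall_self (le_trans (by positivity) hρ))
  obtain ⟨i, hi⟩ := hCc.exists_image_subset_closedBall
    (fun i => lipschitzWith_smul_add_const (lam i) (t i)) hCne hC.le hCB isBounded_closedBall x'
  have hrad : ‖lam i‖₊ * diam (closedBall (0 : E) 1) + infDist x' C
      ≤ 2 * (⨆ j, lam j) + ⨆ y ∈ closedBall (0 : E) 1, infDist y C := by
    rw [coe_nnnorm, Real.norm_of_nonneg (hlam i).1.le, mul_comm 2]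
    gcongr
    · exact le_ciSup (Finite.bddAbove_range _) i
    · simpa using diam_closedBall (x := (0 : E)) zero_le_one
    · exact infDist_le_biSup_infDist isBounded_closedBall hx'B
  refine ⟨i, ?_⟩
  rw [wordMap_append_singleton, image_comp]
  calc wordMap f I '' (f i '' closedBall 0 1)
      ⊆ wordMap f I '' closedBall x' (‖lam i‖₊ * diam (closedBall (0 : E) 1) + infDist x' C) :=
        image_mono hi
    _ ⊆ closedBall (wordMap f I x')
          ((I.map lam).prod * (‖lam i‖₊ * diam (closedBall (0 : E) 1) + infDist x' C)) :=
        image_wordMap_smul_add_closedBall_subset (fun i => (hlam i).1.le) I x' _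
    _ ⊆ closedBall (wordMap f I x') ρ := closedBall_subset_closedBall <|
        ((mul_le_mul_of_nonneg_left hrad hP).trans_eq (mul_comm _ _)).trans hρ

/-- For a self-homothetic attractor `C` with system of balls
`S_I = f_{i₁} ∘ ⋯ ∘ f_{i_k}(B[0,1])` (so `rad S_I = λ_I`), the system is
`(2·max_i λ_i + h_∅)`-uniformly dense: every closed ball `B ⊆ S_I` with
`rad B ≥ (2·max_i λ_i + h_∅)·rad S_I` contains a child `S_{I,i}`. -/
theorem uniformly_dense_ifs {E : Type*} [NormedAddCommGroup E] [NormedSpace ℝ E]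
    [FiniteDimensional ℝ E]
    (m : ℕ) (hm : 0 < m) (lam : Fin m → ℝ) (t : Fin m → E)
    (hlam : ∀ i, lam i ∈ Set.Ioo (0 : ℝ) 1)
    (hsub : ∀ i, closedBall (t i) (lam i) ⊆ closedBall (0 : E) 1)
    (C : Set E) (hCc : IsCompact C) (hCne : C.Nonempty)
    (hC : C = ⋃ i, (fun x => lam i • x + t i) '' C)
    (I : List (Fin m)) (x : E) (ρ : ℝ)
    (hball : closedBall x ρ ⊆ wordMap (fun i x => lam i • x + t i) I '' closedBall (0 : E) 1)
    (hρ : (2 * (⨆ i, lam i) + (⨆ y ∈ closedBall (0 : E) 1, infDist y C)) * (I.map lam).prod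
      ≤ ρ) :
    ∃ i : Fin m,
      wordMap (fun i x => lam i • x + t i) (I ++ [i]) '' closedBall (0 : E) 1
        ⊆ closedBall x ρ :=
  uniformly_dense_ifs_general m lam t hlam hsub C hCc hCne hC I x ρ hball hρ
end

section
/- Invariance under similarities: Let f : ℝ^d → ℝ^d be a surjective similarity with ratio λ > 0, i.e. a bijection satisfying ‖f(x) − f(y)‖ = λ‖x − y‖ for all x, y. Then a set S ⊆ ℝ^d is (α, β, c, ρ, ℋ)-winning if and only if f(S) is (α, β, c, λρ, f(ℋ))-winning, where f(ℋ) := {f(H) : H ∈ ℋ}. -/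
/-!
A similarity `f` of ratio `λ` maps closed balls and closed neighbourhoods `N(L, δ)` onto
closed balls and closed neighbourhoods `N(f L, λδ)`, and Alice's budget `∑ ρᵢ^c ≤ (αρ_m)^c`
is homogeneous in the radii. So against a play of Bob in the image game, Alice pulls the
play back by `f⁻¹`, consults her winning strategy there and pushes its answer forward by `f`.
The converse is the same argument for `f⁻¹`, a similarity of ratio `λ⁻¹`.
-/

open Metric Set Filter
open scoped ENNReal

/-- The radius associated to an (optional) erased pair `(set, radius)`; `0` if unused. -/
def optRad {E : Type*} (p : Option (Set E × ℝ)) : ℝ := p.elim 0 Prod.snd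

/-- The region erased by one of Alice's moves: the union of the closed
`ρ_i`-neighborhoods `N(L_i, ρ_i)` of the chosen sets. -/
def erasedSet {E : Type*} [PseudoEMetricSpace E] (a : ℕ → Option (Set E × ℝ)) : Set E :=
  ⋃ i, (a i).elim ∅ fun p => Metric.cthickening p.2 p.1

/-- Legality of one of Alice's moves in the `(α, β, c, ρ, ℋ)`-potential game, when Bob
has just played a ball of radius `ρm`: each erased set is a closed neighborhood
`N(L, ρ')` with `L ∈ ℋ` and `ρ' > 0`; if `c > 0` the radii satisfy
`∑ ρ_i^c ≤ (α ρm)^c`, and if `c = 0` Alice erases at most one set, of radius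
`≤ α ρm`. (Alice may always pass, by choosing no set at all.) -/
def AliceLegal {E : Type*} (H : Set (Set E)) (α c ρm : ℝ)
    (a : ℕ → Option (Set E × ℝ)) : Prop :=
  (∀ i, ∀ p ∈ a i, p.1 ∈ H ∧ 0 < p.2) ∧
  (if 0 < c then (∑' i, optRad (a i) ^ c) ≤ (α * ρm) ^ c
   else (∀ i, i ≠ 0 → a i = none) ∧ optRad (a 0) ≤ α * ρm)

/-- `S` is an `(α, β, c, ρ₀, ℋ)`-winning set for the potential game: Alice has a
strategy `σ` (assigning to each history of Bob's balls a countable collection of pairs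
`(L_i, ρ_i)`, encoding the erased neighborhoods `N(L_i, ρ_i)`) such that, for every
play of Bob — a sequence of closed balls `B_m = B[x_m, ρ_m]` with `ρ₀ ≤ ρ 0`,
`B_{m+1} ⊆ B_m`, `ρ_{m+1} ≥ β ρ_m` and `ρ_m → 0` — all of Alice's responses are legal,
and any point `z` of `⋂_m B_m` (i.e. the outcome `x_∞`) avoiding all erased sets lies
in `S`. -/
def IsWinning {E : Type*} [NormedAddCommGroup E] (S : Set E) (H : Set (Set E))
    (α β c ρ₀ : ℝ) : Prop :=
  ∃ σ : List (E × ℝ) → ℕ → Option (Set E × ℝ),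
    ∀ (x : ℕ → E) (ρ : ℕ → ℝ),
      (∀ m, 0 < ρ m) →
      ρ₀ ≤ ρ 0 →
      (∀ m, Metric.closedBall (x (m+1)) (ρ (m+1)) ⊆ Metric.closedBall (x m) (ρ m)) →
      (∀ m, β * ρ m ≤ ρ (m+1)) →
      Filter.Tendsto ρ Filter.atTop (nhds 0) →
      (∀ m, AliceLegal H α c (ρ m) (σ (List.ofFn fun k : Fin (m+1) => (x k, ρ k)))) ∧
      ∀ z : E, (∀ m, z ∈ Metric.closedBall (x m) (ρ m)) →
        z ∉ ⋃ m, erasedSet (σ (List.ofFn fun k : Fin (m+1) => (x k, ρ k))) →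
        z ∈ S

/-- `ℋ_M`: the family of all subsets of `E` that are unions of at most `M` spheres. -/
def spheresFamily (E : Type*) [NormedAddCommGroup E] (M : ℕ) : Set (Set E) :=
  {A | ∃ s : Finset (E × ℝ), s.card ≤ M ∧ A = ⋃ p ∈ s, Metric.sphere p.1 p.2}

/-- Unlike `Real.mul_rpow`, no sign condition on `x`: for `x < 0` both sides use the
convention `x ^ c = exp (c log |x|) cos (c π)`. -/
theorem Real.mul_rpow_of_pos_left {a : ℝ} (ha : 0 < a) (x c : ℝ) :
    (a * x) ^ c = a ^ c * x ^ c := by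
  rcases lt_trichotomy x 0 with hx | rfl | hx
  · rw [Real.rpow_def_of_neg (mul_neg_of_pos_of_neg ha hx), Real.rpow_def_of_neg hx,
      Real.rpow_def_of_pos ha, Real.log_mul ha.ne' hx.ne, add_mul, Real.exp_add, mul_assoc]
  · rcases eq_or_ne c 0 with rfl | hc
    · simp
    · simp [Real.zero_rpow hc]
  · exact Real.mul_rpow ha.le hx.le

def scaleMove {E F : Type*} (φ : Set E → Set F) (lam : ℝ) (a : ℕ → Option (Set E × ℝ)) :
    ℕ → Option (Set F × ℝ) :=
  fun i => (a i).map fun p => (φ p.1, lam * p.2)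

section

variable {E F : Type*}

theorem optRad_scaleMove (φ : Set E → Set F) (lam : ℝ) (a : ℕ → Option (Set E × ℝ)) (i : ℕ) :
    optRad (scaleMove φ lam a i) = lam * optRad (a i) := by
  unfold scaleMove
  cases a i <;> simp [optRad]

theorem aliceLegal_scaleMove {H : Set (Set E)} {α c ρ lam : ℝ} {a : ℕ → Option (Set E × ℝ)}
    (φ : Set E → Set F) (hlam : 0 < lam) (ha : AliceLegal H α c ρ a) :
    AliceLegal (φ '' H) α c (lam * ρ) (scaleMove φ lam a) := by
  obtain ⟨hmem, hrad⟩ := ha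
  refine ⟨fun i p hp => ?_, ?_⟩
  · obtain ⟨q, hq, rfl⟩ := Option.map_eq_some_iff.1 hp
    exact ⟨mem_image_of_mem φ (hmem i q hq).1, mul_pos hlam (hmem i q hq).2⟩
  split_ifs at hrad ⊢ with hc
  · calc ∑' i, optRad (scaleMove φ lam a i) ^ c
        = lam ^ c * ∑' i, optRad (a i) ^ c := by
          simp only [optRad_scaleMove, Real.mul_rpow_of_pos_left hlam, tsum_mul_left]
      _ ≤ lam ^ c * (α * ρ) ^ c := by gcongr
      _ = (α * (lam * ρ)) ^ c := by
          rw [← Real.mul_rpow_of_pos_left hlam, mul_left_comm]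
  · refine ⟨fun i hi => by simp [scaleMove, hrad.1 i hi], ?_⟩
    rw [optRad_scaleMove, mul_left_comm]
    exact mul_le_mul_of_nonneg_left hrad.2 hlam.le

variable [NormedAddCommGroup E] [NormedAddCommGroup F] {e : E ≃ F} {lam : ℝ}

theorem dist_symm_apply_of_similarity (hlam : 0 < lam)
    (hsim : ∀ x y, dist (e x) (e y) = lam * dist x y) (x y : F) :
    dist (e.symm x) (e.symm y) = lam⁻¹ * dist x y := by
  rw [← e.apply_symm_apply x, ← e.apply_symm_apply y, hsim, e.symm_apply_apply,
    e.symm_apply_apply, inv_mul_cancel_left₀ hlam.ne']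

theorem preimage_closedBall_of_similarity (hlam : 0 < lam)
    (hsim : ∀ x y, dist (e x) (e y) = lam * dist x y) (y : F) (t : ℝ) :
    e ⁻¹' closedBall y t = closedBall (e.symm y) (t / lam) := by
  ext z
  rw [mem_preimage, mem_closedBall, mem_closedBall, ← e.apply_symm_apply y, hsim,
    e.symm_apply_apply, le_div_iff₀' hlam]

theorem image_cthickening_of_similarity (hlam : 0 < lam)
    (hsim : ∀ x y, dist (e x) (e y) = lam * dist x y) (δ : ℝ) (A : Set E) :
    e '' cthickening δ A = cthickening (lam * δ) (e '' A) := by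
  have hedist : ∀ x y, edist (e x) (e y) = ENNReal.ofReal lam * edist x y := fun x y => by
    rw [edist_dist, edist_dist, hsim, ENNReal.ofReal_mul hlam.le]
  have hinf : ∀ x, infEDist (e x) (e '' A) = ENNReal.ofReal lam * infEDist x A := fun x => by
    simp only [infEDist, iInf_image, hedist,
      ENNReal.mul_iInf_of_ne (by simpa using hlam) ENNReal.ofReal_ne_top]
  ext y
  rw [← e.apply_symm_apply y, e.injective.mem_set_image, mem_cthickening_iff,
    mem_cthickening_iff, hinf, ENNReal.ofReal_mul hlam.le,
    ENNReal.mul_le_mul_iff_right (by simpa using hlam) ENNReal.ofReal_ne_top]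

theorem image_erasedSet_of_similarity (hlam : 0 < lam)
    (hsim : ∀ x y, dist (e x) (e y) = lam * dist x y) (a : ℕ → Option (Set E × ℝ)) :
    e '' erasedSet a = erasedSet (scaleMove (e '' ·) lam a) := by
  simp only [erasedSet, image_iUnion, scaleMove]
  refine iUnion_congr fun i => ?_
  cases a i <;> simp [image_cthickening_of_similarity hlam hsim]

theorem IsWinning.image_of_similarity (hlam : 0 < lam)
    (hsim : ∀ x y, dist (e x) (e y) = lam * dist x y) {S : Set E} {H : Set (Set E)}
    {α β c ρ₀ : ℝ} (hS : IsWinning S H α β c ρ₀) :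
    IsWinning (e '' S) ((e '' ·) '' H) α β c (lam * ρ₀) := by
  obtain ⟨σ, hσ⟩ := hS
  let pull : F × ℝ → E × ℝ := fun q => (e.symm q.1, q.2 / lam)
  refine ⟨fun L => scaleMove (e '' ·) lam (σ (L.map pull)), ?_⟩
  intro x r hr hr0 hnest hβ hlim
  have hball := preimage_closedBall_of_similarity hlam hsim
  have hhist : ∀ m, (List.ofFn fun k : Fin (m+1) => (x k, r k)).map pull =
      List.ofFn fun k : Fin (m+1) => (e.symm (x k), r k / lam) := fun m => by
    rw [List.map_ofFn]; rfl
  obtain ⟨hlegal, hwin⟩ := hσ (fun m => e.symm (x m)) (fun m => r m / lam)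
    (fun m => div_pos (hr m) hlam) ((le_div_iff₀ hlam).2 (by linarith))
    (fun m => by simpa only [hball] using preimage_mono (f := e) (hnest m))
    (fun m => by rw [← mul_div_assoc]; exact div_le_div_of_nonneg_right (hβ m) hlam.le)
    (by simpa using hlim.div_const lam)
  refine ⟨fun m => ?_, fun z hz hzerased => ?_⟩
  · simpa only [hhist, mul_div_cancel₀ _ hlam.ne'] using
      aliceLegal_scaleMove (e '' ·) hlam (hlegal m)
  · refine ⟨e.symm z, hwin _ (fun m => ?_) (fun hmem => hzerased ?_), e.apply_symm_apply z⟩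
    · rw [← hball, mem_preimage, e.apply_symm_apply]
      exact hz m
    · obtain ⟨m, hm⟩ := mem_iUnion.1 hmem
      refine mem_iUnion.2 ⟨m, ?_⟩
      dsimp only
      rw [hhist, ← image_erasedSet_of_similarity hlam hsim, ← e.apply_symm_apply z]
      exact mem_image_of_mem e hm

end

theorem winning_similarity_invariant_general {E : Type*} [NormedAddCommGroup E]
    (f : E → E) (hbij : Function.Bijective f) (lam : ℝ) (hlam : 0 < lam)
    (hsim : ∀ x y : E, ‖f x - f y‖ = lam * ‖x - y‖)
    (S : Set E) (H : Set (Set E)) (α β c ρ : ℝ) :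
    IsWinning S H α β c ρ ↔
      IsWinning (f '' S) ((fun A => f '' A) '' H) α β c (lam * ρ) := by
  let e := Equiv.ofBijective f hbij
  have he : ∀ x y, dist (e x) (e y) = lam * dist x y := fun x y => by
    rw [dist_eq_norm, dist_eq_norm]
    exact hsim x y
  have hsymm_image : ∀ A, e.symm '' (f '' A) = A := e.symm_image_image
  refine ⟨IsWinning.image_of_similarity hlam he, fun hw => ?_⟩
  have hback := hw.image_of_similarity (e := e.symm) (inv_pos.2 hlam)
    (dist_symm_apply_of_similarity hlam he)
  simpa only [hsymm_image, image_image, image_id', inv_mul_cancel_left₀ hlam.ne'] using hback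

/-- **Invariance under similarities.** If `f : ℝ^d → ℝ^d` is a surjective
similarity with ratio `λ > 0`, then `S` is `(α, β, c, ρ, ℋ)`-winning iff `f(S)` is
`(α, β, c, λρ, f(ℋ))`-winning. -/
theorem winning_similarity_invariant {E : Type*} [NormedAddCommGroup E]
    [NormedSpace ℝ E] [FiniteDimensional ℝ E]
    (f : E → E) (hbij : Function.Bijective f) (lam : ℝ) (hlam : 0 < lam)
    (hsim : ∀ x y : E, ‖f x - f y‖ = lam * ‖x - y‖)
    (S : Set E) (H : Set (Set E)) (α β c ρ : ℝ)
    (hα : 0 < α) (hβ : β ∈ Set.Ioo (0 : ℝ) 1) (hc : 0 ≤ c) (hρ : 0 < ρ) :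
    IsWinning S H α β c ρ ↔
      IsWinning (f '' S) ((fun A => f '' A) '' H) α β c (lam * ρ) :=
  winning_similarity_invariant_general f hbij lam hlam hsim S H α β c ρ
end
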